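/- arXiv:2102.10907 — 5 statements merged into one kernel-verified Lean document; each statement's English description precedes it below -/
import Mathlib

section
/- Piola identity: let n ≥ 1 and let φ : ℝⁿ → ℝⁿ be twice continuously differentiable. For X ∈ ℝⁿ let F(X) be the n×n Jacobian matrix with entries F(X)_{a i} = ∂φᵃ/∂Xⁱ(X), and let adj F(X) be its adjugate, so that F(X) · adj F(X) = det(F(X)) · I. Then for every index a ∈ {1,…,n} and every X ∈ ℝⁿ, Σ_{i=1}^{n} ∂/∂Xⁱ [ (adj F(X))_{i a} ] = 0; that is, for each a the vector field X ↦ ((adj F(X))_{1 a}, …, (adj F(X))_{n a}) is divergence-free. -/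
/-!
Write `e_i` for the standard basis and `H_{kij} = ∂ᵢ∂ⱼφᵏ`. The entry `(adj F)_{ia}` is the
determinant of `F` with row `a` replaced by `e_i`. Differentiating this determinant row by row,
`∂ᵢ (adj F)_{ia} = ∑_{k ≠ a} ∑ⱼ H_{kij} D^k_{ij}`, where `D^k_{ij}` is the determinant of `F`
with rows `a` and `k` replaced by `e_i` and `e_j`. Summed over `i`, this pairs the Hessian,
symmetric in `i, j`, with `D^k`, which is antisymmetric in `i, j` because exchanging rows `a`
and `k` flips the sign of a determinant; so the sum vanishes.
-/

open Matrix Finset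

theorem sum_sum_mul_eq_zero_of_symm_of_antisymm {ι R : Type*} [Fintype ι] [CommRing R]
    [IsAddTorsionFree R] {c T : ι → ι → R} (hc : ∀ i j, c i j = c j i)
    (hT : ∀ i j, T i j = -T j i) :
    ∑ i, ∑ j, c i j * T i j = 0 := by
  refine self_eq_neg.mp ?_
  calc ∑ i, ∑ j, c i j * T i j = ∑ j, ∑ i, c i j * T i j := sum_comm
    _ = -∑ i, ∑ j, c i j * T i j := by
      simp only [← sum_neg_distrib]
      exact sum_congr rfl fun j _ => sum_congr rfl fun i _ => by rw [hc i j, hT i j, mul_neg]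

namespace Matrix

variable {ι : Type*} [Fintype ι] [DecidableEq ι]

section CommRing

variable {R : Type*} [CommRing R]

theorem det_updateRow_eq_sum (A : Matrix ι ι R) (k : ι) (w : ι → R) :
    (A.updateRow k w).det = ∑ j, w j * (A.updateRow k (Pi.single j 1)).det := by
  rw [det_eq_sum_mul_adjugate_row _ k]
  simp [adjugate_apply]

theorem det_updateRow_updateRow_swap (A : Matrix ι ι R) {a k : ι} (hak : a ≠ k) (u w : ι → R) :
    ((A.updateRow a u).updateRow k w).det = -((A.updateRow a w).updateRow k u).det := by
  have h := det_permute (Equiv.swap a k) ((A.updateRow a w).updateRow k u)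
  rw [Equiv.Perm.sign_swap hak] at h
  push_cast at h
  rw [← neg_one_mul, ← h]
  congr 1
  ext b j
  by_cases hb : b = a <;> by_cases hb' : b = k <;>
    simp_all [updateRow_apply, Equiv.swap_apply_def]

end CommRing

variable {𝕜 : Type*} [NontriviallyNormedField 𝕜]

noncomputable def detRowContinuousMultilinear :
    ContinuousMultilinearMap 𝕜 (fun _ : ι => ι → 𝕜) 𝕜 where
  toMultilinearMap := (detRowAlternating : (ι → 𝕜) [⋀^ι]→ₗ[𝕜] 𝕜).toMultilinearMap
  cont := (continuous_id.matrix_det : Continuous fun M : Matrix ι ι 𝕜 => M.det)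

variable {E : Type*} [NormedAddCommGroup E] [NormedSpace 𝕜 E]

theorem fderiv_det_apply {M : E → Matrix ι ι 𝕜} {x : E}
    (hM : ∀ i j, DifferentiableAt 𝕜 (fun y => M y i j) x) (v : E) :
    fderiv 𝕜 (fun y => (M y).det) x v =
      ∑ k, ((M x).updateRow k fun j => fderiv 𝕜 (fun y => M y k j) x v).det := by
  have hrows : HasFDerivAt (fun y => of.symm (M y))
      (.pi fun i => .pi fun j => fderiv 𝕜 (fun y => M y i j) x) x :=
    hasFDerivAt_pi.2 fun i => hasFDerivAt_pi.2 fun j => (hM i j).hasFDerivAt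
  have hdet : HasFDerivAt (fun y => detRowContinuousMultilinear (of.symm (M y))) _ x :=
    ((detRowContinuousMultilinear (𝕜 := 𝕜) (ι := ι)).hasFDerivAt (of.symm (M x))).comp x hrows
  change fderiv 𝕜 (fun y => detRowContinuousMultilinear (of.symm (M y))) x v = _
  rw [hdet.fderiv, ContinuousLinearMap.comp_apply, ContinuousMultilinearMap.linearDeriv_apply]
  rfl

theorem fderiv_adjugate_apply {M : E → Matrix ι ι 𝕜} {x : E}
    (hM : ∀ i j, DifferentiableAt 𝕜 (fun y => M y i j) x) (i a : ι) (v : E) :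
    fderiv 𝕜 (fun y => (M y).adjugate i a) x v =
      ∑ k ∈ univ.erase a, ∑ j, fderiv 𝕜 (fun y => M y k j) x v *
        (((M x).updateRow a (Pi.single i 1)).updateRow k (Pi.single j 1)).det := by
  simp only [adjugate_apply]
  have hM' : ∀ k j, DifferentiableAt 𝕜 (fun y => (M y).updateRow a (Pi.single i 1) k j) x := by
    intro k j
    by_cases hk : k = a
    · simp only [hk, updateRow_self, differentiableAt_const]
    · simpa only [updateRow_ne hk] using hM k j
  rw [fderiv_det_apply hM', ← add_sum_erase _ _ (mem_univ a)]
  -- row `a` is constant, so its derivative is the zero row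
  simp only [updateRow_self, fderiv_const_apply]
  rw [det_eq_zero_of_row_eq_zero a fun j => by simp, zero_add]
  refine sum_congr rfl fun k hk => ?_
  simp only [updateRow_ne (ne_of_mem_erase hk)]
  exact det_updateRow_eq_sum _ _ _

end Matrix

theorem piola_identity_general
    (n : ℕ)
    (φ : (Fin n → ℝ) → (Fin n → ℝ)) (hφ : ContDiff ℝ 2 φ)
    (F : (Fin n → ℝ) → Matrix (Fin n) (Fin n) ℝ)
    (hF : ∀ X a i, F X a i = fderiv ℝ φ X (Pi.single i 1) a) :
    ∀ (a : Fin n) (X : Fin n → ℝ),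
      ∑ i : Fin n, fderiv ℝ (fun Y => (F Y).adjugate i a) X (Pi.single i 1) = 0 := by
  intro a X
  have hDφ : DifferentiableAt ℝ (fderiv ℝ φ) X :=
    (hφ.fderiv_right le_rfl).differentiable one_ne_zero X
  have hF_diff : ∀ k j, DifferentiableAt ℝ (fun Y => F Y k j) X := by
    simp only [hF]
    fun_prop
  have hF_fderiv : ∀ v k j,
      fderiv ℝ (fun Y => F Y k j) X v = fderiv ℝ (fderiv ℝ φ) X v (Pi.single j 1) k := by
    intro v k j
    simp only [hF]
    rw [fderiv_apply (by fun_prop), fderiv_clm_apply hDφ (differentiableAt_const _)]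
    simp
  simp only [fderiv_adjugate_apply hF_diff, hF_fderiv]
  rw [sum_comm]
  refine sum_eq_zero fun k hk => sum_sum_mul_eq_zero_of_symm_of_antisymm (fun i j => ?_)
    fun i j => det_updateRow_updateRow_swap _ (ne_of_mem_erase hk).symm _ _
  exact congrFun (hφ.contDiffAt.isSymmSndFDerivAt (by simp) _ _) k

/-- **Piola identity**: for a twice continuously differentiable map `φ : ℝⁿ → ℝⁿ`
with Jacobian matrix `F(X)_{a i} = ∂φᵃ/∂Xⁱ(X)`, each column of the adjugate of `F`
is divergence free: `∑ᵢ ∂/∂Xⁱ (adj F(X))_{i a} = 0`. -/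
theorem piola_identity
    (n : ℕ) (hn : 1 ≤ n)
    (φ : (Fin n → ℝ) → (Fin n → ℝ)) (hφ : ContDiff ℝ 2 φ)
    (F : (Fin n → ℝ) → Matrix (Fin n) (Fin n) ℝ)
    (hF : ∀ X a i, F X a i = fderiv ℝ φ X (Pi.single i 1) a) :
    ∀ (a : Fin n) (X : Fin n → ℝ),
      ∑ i : Fin n, fderiv ℝ (fun Y => (F Y).adjugate i a) X (Pi.single i 1) = 0 :=
  piola_identity_general n φ hφ F hF
end

section
/- Equivalence of material and Eulerian barotropic momentum equations: in the continuum setup, assume in addition that for every t the map φ(t,·) is a C² diffeomorphism of ℝⁿ, that ρ₀ : ℝⁿ → ℝ and ρ : ℝ × ℝⁿ → ℝ satisfy ρ₀(X) = ρ(t, φ(t,X)) · det F(t,X) for all (t,X), that p : ℝ × ℝⁿ → ℝ is continuously differentiable in x, and that Π : ℝⁿ → ℝ is continuously differentiable. Then the material momentum equation — for all (t,X) and each a ∈ {1,…,n}: ρ₀(X) ∂²φᵃ/∂t²(t,X) + Σ_{i=1}^{n} ∂/∂Xⁱ [ p(t, φ(t,X)) (adj F(t,X))_{i a} ] = −ρ₀(X)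 (∂Π/∂xᵃ)(φ(t,X)) — holds if and only if the Eulerian momentum equation ρ(∂u/∂t + (u·∇_x)u) = −∇_x p − ρ ∇_x Π holds at every (t,x) ∈ ℝ × ℝⁿ. -/
/-!
Along a trajectory `x = φ(t, X)` the chain rule turns `∂²φ/∂t²` into the material derivative
`∂u/∂t + (u·∇)u`. By the Piola identity `∑ᵢ ∂ᵢ (adj F)ᵢₐ = 0`, which comes from the symmetry of
the second derivatives of `φ(t, ·)`, the divergence term reduces to `∑ᵢ (adj F)ᵢₐ ∂ᵢ(p ∘ φ)`, and
since `F · adj F = J · 1` this is `J (∂ₐp) ∘ φ`. With `ρ₀ = (ρ ∘ φ) J` the material equation is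
therefore `J` times the Eulerian equation at `x = φ(t, X)`; as `J ≠ 0` and `φ(t, ·)` is onto,
the two are equivalent.
-/

open Matrix Function

theorem AlternatingMap.map_update_update_swap {R M N ι : Type*} [CommSemiring R]
    [AddCommMonoid M] [Module R M] [AddCommGroup N] [Module R N] [DecidableEq ι]
    (f : M [⋀^ι]→ₗ[R] N) (v : ι → M) {i j : ι} (hij : i ≠ j) (x y : M) :
    f (update (update v i x) j y) = -f (update (update v i y) j x) := by
  rw [← f.map_swap _ hij, Equiv.comp_swap_eq_update]
  congr 1
  funext k
  simp only [update_apply]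
  split_ifs <;> simp_all

theorem Finset.sum_sum_mul_eq_zero_of_symm_of_antisymm {R ι : Type*} [CommRing R]
    [NoZeroDivisors R] [CharZero R] [Fintype ι] (S D : ι → ι → R)
    (hS : ∀ i j, S i j = S j i) (hD : ∀ i j, D i j = -D j i) :
    ∑ i, ∑ j, S i j * D i j = 0 := by
  refine self_eq_neg.mp (Finset.sum_comm.trans ?_)
  simp only [← Finset.sum_neg_distrib]
  refine Finset.sum_congr rfl fun j _ => Finset.sum_congr rfl fun i _ => ?_
  rw [hS i j, hD i j, mul_neg]

theorem ContinuousLinearMap.map_eq_sum_smul_map_single {𝕜 ι F : Type*} [Semiring 𝕜]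
    [TopologicalSpace 𝕜] [Fintype ι] [DecidableEq ι] [TopologicalSpace F] [AddCommMonoid F]
    [Module 𝕜 F] (L : (ι → 𝕜) →L[𝕜] F) (v : ι → 𝕜) :
    L v = ∑ k, v k • L (Pi.single k 1) := by
  conv_lhs => rw [← Finset.univ_sum_single v, map_sum]
  refine Finset.sum_congr rfl fun k _ => ?_
  rw [← map_smul, ← Pi.single_smul', smul_eq_mul, mul_one]

theorem fderiv_comp_prodMk_right_apply {𝕜 E F G : Type*} [NontriviallyNormedField 𝕜]
    [NormedAddCommGroup E] [NormedSpace 𝕜 E] [NormedAddCommGroup F] [NormedSpace 𝕜 F]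
    [NormedAddCommGroup G] [NormedSpace 𝕜 G] {f : E × F → G} {x : E} {y : F}
    (hf : DifferentiableAt 𝕜 f (x, y)) (v : F) :
    fderiv 𝕜 (fun z => f (x, z)) y v = fderiv 𝕜 f (x, y) (0, v) := by
  have h : HasFDerivAt (fun z => f (x, z)) (fderiv 𝕜 f (x, y) ∘L .inr 𝕜 E F) y :=
    hf.hasFDerivAt.comp y (hasFDerivAt_prodMk_right x y)
  rw [h.fderiv]
  rfl

section NontriviallyNormedField

variable {𝕜 : Type*} [NontriviallyNormedField 𝕜] {ι : Type*} [Fintype ι] [DecidableEq ι]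
  {E : Type*} [NormedAddCommGroup E] [NormedSpace 𝕜 E]

variable (𝕜 ι) in
noncomputable def Matrix.detRowContinuousMultilinear_s7 : ContinuousMultilinearMap 𝕜 (fun _ : ι => ι → 𝕜) 𝕜 :=
  { (detRowAlternating : (ι → 𝕜) [⋀^ι]→ₗ[𝕜] 𝕜).toMultilinearMap with
    cont := continuous_id.matrix_det }

theorem hasFDerivAt_adjugate_apply {A : E → Matrix ι ι 𝕜} {A' : ι → E →L[𝕜] ι → 𝕜} {X : E}
    (hA : ∀ c, HasFDerivAt (fun Y => A Y c) (A' c) X) (i a : ι) :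
    HasFDerivAt (fun Y => (A Y).adjugate i a)
      (∑ c, (detRowContinuousMultilinear_s7 𝕜 ι).toContinuousLinearMap
        ((A X).updateRow a (Pi.single i 1)) c ∘L update A' a 0 c) X := by
  simp only [adjugate_apply]
  refine HasFDerivAt.multilinear_comp (detRowContinuousMultilinear_s7 𝕜 ι)
    (g := fun c Y => (A Y).updateRow a (Pi.single i 1) c) fun c => ?_
  rcases eq_or_ne c a with rfl | hca
  · simp only [updateRow_self, update_self]
    exact hasFDerivAt_const _ X
  · simp only [updateRow_ne hca, update_of_ne hca]
    exact hA c

noncomputable def fderivMatrix (ψ : (ι → 𝕜) → ι → 𝕜) (Y : ι → 𝕜) : Matrix ι ι 𝕜 :=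
  of fun c j => fderiv 𝕜 ψ Y (Pi.single j 1) c

theorem fderivMatrix_eq_toMatrix' (ψ : (ι → 𝕜) → ι → 𝕜) (Y : ι → 𝕜) :
    fderivMatrix ψ Y = LinearMap.toMatrix' (fderiv 𝕜 ψ Y : (ι → 𝕜) →ₗ[𝕜] ι → 𝕜) := by
  ext c j
  rw [LinearMap.toMatrix'_apply]
  rfl

theorem hasFDerivAt_fderivMatrix_row {ψ : (ι → 𝕜) → ι → 𝕜} {X : ι → 𝕜}
    (hψ : DifferentiableAt 𝕜 (fderiv 𝕜 ψ) X) (c : ι) :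
    HasFDerivAt (fun Y => fderivMatrix ψ Y c)
      ((ContinuousLinearMap.pi fun j => ContinuousLinearMap.proj c ∘L
        ContinuousLinearMap.apply 𝕜 (ι → 𝕜) (Pi.single j 1)) ∘L fderiv 𝕜 (fderiv 𝕜 ψ) X) X :=
  HasFDerivAt.comp (g := ContinuousLinearMap.pi fun j => ContinuousLinearMap.proj c ∘L
    ContinuousLinearMap.apply 𝕜 (ι → 𝕜) (Pi.single j 1)) X (ContinuousLinearMap.hasFDerivAt _)
    hψ.hasFDerivAt

theorem fderiv_comp_apply_single {q : (ι → 𝕜) → 𝕜} {ψ : (ι → 𝕜) → ι → 𝕜} {X : ι → 𝕜}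
    (hq : DifferentiableAt 𝕜 q (ψ X)) (hψ : DifferentiableAt 𝕜 ψ X) (i : ι) :
    fderiv 𝕜 (fun Y => q (ψ Y)) X (Pi.single i 1)
      = ∑ b, fderivMatrix ψ X b i * fderiv 𝕜 q (ψ X) (Pi.single b 1) := by
  rw [fderiv_fun_comp X hq hψ, ContinuousLinearMap.comp_apply,
    ContinuousLinearMap.map_eq_sum_smul_map_single]
  rfl

theorem fderivMatrix_comp {g ψ : (ι → 𝕜) → ι → 𝕜} {X : ι → 𝕜}
    (hg : DifferentiableAt 𝕜 g (ψ X)) (hψ : DifferentiableAt 𝕜 ψ X) :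
    fderivMatrix (g ∘ ψ) X = fderivMatrix g (ψ X) * fderivMatrix ψ X := by
  rw [fderivMatrix_eq_toMatrix', fderivMatrix_eq_toMatrix', fderivMatrix_eq_toMatrix',
    fderiv_comp X hg hψ, ContinuousLinearMap.toLinearMap_comp, LinearMap.toMatrix'_comp]

theorem det_fderivMatrix_ne_zero_of_leftInverse {g ψ : (ι → 𝕜) → ι → 𝕜} {X : ι → 𝕜}
    (hg : DifferentiableAt 𝕜 g (ψ X)) (hψ : DifferentiableAt 𝕜 ψ X) (h : LeftInverse g ψ) :
    (fderivMatrix ψ X).det ≠ 0 := by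
  refine det_ne_zero_of_left_inverse (B := fderivMatrix g (ψ X)) ?_
  rw [← fderivMatrix_comp hg hψ, h.comp_eq_id, fderivMatrix_eq_toMatrix', fderiv_id,
    ContinuousLinearMap.coe_id, LinearMap.toMatrix'_id]

end NontriviallyNormedField

section RCLike

variable {𝕜 : Type*} [RCLike 𝕜] {ι : Type*} [Fintype ι] [DecidableEq ι]

theorem sum_fderiv_adjugate_fderivMatrix_eq_zero {ψ : (ι → 𝕜) → ι → 𝕜}
    (hψ : ContDiff 𝕜 2 ψ) (a : ι) (X : ι → 𝕜) :
    ∑ i, fderiv 𝕜 (fun Y => (fderivMatrix ψ Y).adjugate i a) X (Pi.single i 1) = 0 := by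
  set W := fderiv 𝕜 (fderiv 𝕜 ψ) X
  have hW : HasFDerivAt (fderiv 𝕜 ψ) W X :=
    ((hψ.fderiv_right one_add_one_eq_two.le).differentiable one_ne_zero X).hasFDerivAt
  have hW_symm : ∀ v w, W v w = W w v :=
    second_derivative_symmetric (fun Y => (hψ.differentiable two_ne_zero Y).hasFDerivAt) hW
  -- Row `a` of the matrix whose determinant is the adjugate entry is the constant `eᵢ`; every
  -- other row `c` pairs the Hessian of `ψ c`, symmetric in `(i, j)`, with `D c i j` below,
  -- which is antisymmetric in `(i, j)`.
  set D : ι → ι → ι → 𝕜 := fun c i j => detRowContinuousMultilinear_s7 𝕜 ι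
    (update ((fderivMatrix ψ X).updateRow a (Pi.single i 1)) c (Pi.single j 1))
  have hentry : ∀ i, fderiv 𝕜 (fun Y => (fderivMatrix ψ Y).adjugate i a) X (Pi.single i 1)
      = ∑ c ∈ Finset.univ.erase a, ∑ j, W (Pi.single i 1) (Pi.single j 1) c * D c i j := by
    intro i
    rw [(hasFDerivAt_adjugate_apply (hasFDerivAt_fderivMatrix_row hW.differentiableAt) i a).fderiv,
      _root_.sum_apply, ← Finset.add_sum_erase _ _ (Finset.mem_univ a),
      ContinuousLinearMap.comp_apply, update_self, _root_.zero_apply, map_zero, zero_add]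
    refine Finset.sum_congr rfl fun c hc => ?_
    rw [ContinuousLinearMap.comp_apply, update_of_ne (Finset.ne_of_mem_erase hc),
      ContinuousLinearMap.map_eq_sum_smul_map_single]
    rfl
  have hD : ∀ c ≠ a, ∀ i j, D c i j = -D c j i := fun c hca i j =>
    (detRowAlternating : (ι → 𝕜) [⋀^ι]→ₗ[𝕜] 𝕜).map_update_update_swap _ hca.symm _ _
  rw [Finset.sum_congr rfl fun i _ => hentry i, Finset.sum_comm]
  exact Finset.sum_eq_zero fun c hc => Finset.sum_sum_mul_eq_zero_of_symm_of_antisymm _ _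
    (fun i j => congrFun (hW_symm _ _) c) (hD c (Finset.ne_of_mem_erase hc))

theorem sum_fderiv_mul_adjugate_fderivMatrix {q : (ι → 𝕜) → 𝕜}
    {ψ : (ι → 𝕜) → ι → 𝕜} {X : ι → 𝕜} (hψ : ContDiff 𝕜 2 ψ)
    (hq : DifferentiableAt 𝕜 q (ψ X)) (a : ι) :
    ∑ i, fderiv 𝕜 (fun Y => q (ψ Y) * (fderivMatrix ψ Y).adjugate i a) X (Pi.single i 1)
      = fderiv 𝕜 q (ψ X) (Pi.single a 1) * (fderivMatrix ψ X).det := by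
  have hψX : DifferentiableAt 𝕜 ψ X := hψ.differentiable two_ne_zero X
  have hadj : ∀ i, DifferentiableAt 𝕜 (fun Y => (fderivMatrix ψ Y).adjugate i a) X := fun i =>
    (hasFDerivAt_adjugate_apply (hasFDerivAt_fderivMatrix_row
      ((hψ.fderiv_right one_add_one_eq_two.le).differentiable one_ne_zero X)) i a).differentiableAt
  set M := fderivMatrix ψ X
  have hproduct : ∀ i,
      fderiv 𝕜 (fun Y => q (ψ Y) * (fderivMatrix ψ Y).adjugate i a) X (Pi.single i 1)
        = q (ψ X) * fderiv 𝕜 (fun Y => (fderivMatrix ψ Y).adjugate i a) X (Pi.single i 1)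
          + M.adjugate i a * ∑ b, M b i * fderiv 𝕜 q (ψ X) (Pi.single b 1) := by
    intro i
    have hqψ : DifferentiableAt 𝕜 (fun Y => q (ψ Y)) X := hq.comp X hψX
    rw [fderiv_fun_mul hqψ (hadj i), _root_.add_apply, _root_.smul_apply, _root_.smul_apply,
      fderiv_comp_apply_single hq hψX, smul_eq_mul, smul_eq_mul]
  calc ∑ i, fderiv 𝕜 (fun Y => q (ψ Y) * (fderivMatrix ψ Y).adjugate i a) X (Pi.single i 1)
      = q (ψ X) * ∑ i, fderiv 𝕜 (fun Y => (fderivMatrix ψ Y).adjugate i a) X (Pi.single i 1)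
        + ∑ i, M.adjugate i a * ∑ b, M b i * fderiv 𝕜 q (ψ X) (Pi.single b 1) := by
        rw [Finset.sum_congr rfl fun i _ => hproduct i, Finset.sum_add_distrib, Finset.mul_sum]
    _ = ∑ b, (M * M.adjugate) b a * fderiv 𝕜 q (ψ X) (Pi.single b 1) := by
        rw [sum_fderiv_adjugate_fderivMatrix_eq_zero hψ, mul_zero, zero_add]
        simp only [mul_apply, Finset.mul_sum, Finset.sum_mul]
        rw [Finset.sum_comm]
        exact Finset.sum_congr rfl fun b _ => Finset.sum_congr rfl fun i _ => by ring
    _ = fderiv 𝕜 q (ψ X) (Pi.single a 1) * M.det := by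
        simp [mul_adjugate, one_apply, mul_comm]

end RCLike

section Real

variable {ι : Type*} [Fintype ι] [DecidableEq ι]

theorem fderiv_timeDeriv_eq_materialDeriv {φ u : ℝ × (ι → ℝ) → ι → ℝ} {t : ℝ} {X : ι → ℝ}
    (hφ : DifferentiableAt ℝ φ (t, X)) (hu : DifferentiableAt ℝ u (t, φ (t, X)))
    (hflow : ∀ t X, fderiv ℝ φ (t, X) (1, 0) = u (t, φ (t, X))) (a : ι) :
    fderiv ℝ (fun y => fderiv ℝ φ y (1, 0) a) (t, X) (1, 0)
      = fderiv ℝ u (t, φ (t, X)) (1, 0) a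
        + ∑ b, u (t, φ (t, X)) b * fderiv ℝ u (t, φ (t, X)) (0, Pi.single b 1) a := by
  have hφu : (fun y => fderiv ℝ φ y (1, 0) a) = fun y => u (y.1, φ y) a :=
    funext fun y => congrFun (hflow y.1 y.2) a
  have hpath : HasFDerivAt (fun y : ℝ × (ι → ℝ) => (y.1, φ y))
      ((ContinuousLinearMap.fst ℝ ℝ (ι → ℝ)).prod (fderiv ℝ φ (t, X))) (t, X) :=
    hasFDerivAt_fst.prodMk hφ.hasFDerivAt
  have hvel : ((1 : ℝ), u (t, φ (t, X)))
      = (1, 0) + ContinuousLinearMap.inr ℝ ℝ (ι → ℝ) (u (t, φ (t, X))) := by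
    simp
  have hcomp : HasFDerivAt (fun y => u (y.1, φ y) a) (.proj a ∘L fderiv ℝ u (t, φ (t, X)) ∘L
      (ContinuousLinearMap.fst ℝ ℝ (ι → ℝ)).prod (fderiv ℝ φ (t, X))) (t, X) :=
    hasFDerivAt_pi'.1 (hu.hasFDerivAt.comp (t, X) hpath) a
  rw [hφu, hcomp.fderiv]
  simp only [ContinuousLinearMap.comp_apply, ContinuousLinearMap.prod_apply,
    ContinuousLinearMap.coe_fst', hflow]
  rw [hvel, map_add, ← ContinuousLinearMap.comp_apply _ (ContinuousLinearMap.inr ℝ ℝ (ι → ℝ)),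
    (fderiv ℝ u (t, φ (t, X)) ∘L .inr ℝ ℝ (ι → ℝ)).map_eq_sum_smul_map_single]
  simp

theorem material_momentum_iff_eulerian_momentum_at {φ u : ℝ × (ι → ℝ) → ι → ℝ}
    {F : ℝ → (ι → ℝ) → Matrix ι ι ℝ} {ρ₀ : (ι → ℝ) → ℝ}
    {ρ p : ℝ × (ι → ℝ) → ℝ} {Pot : (ι → ℝ) → ℝ} {g : (ι → ℝ) → ι → ℝ} {t : ℝ} {X : ι → ℝ}
    (hφ : ContDiff ℝ 2 φ) (hu : DifferentiableAt ℝ u (t, φ (t, X)))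
    (hflow : ∀ t X, fderiv ℝ φ (t, X) (1, 0) = u (t, φ (t, X)))
    (hF : ∀ Y a i, F t Y a i = fderiv ℝ φ (t, Y) (0, Pi.single i 1) a)
    (hg : DifferentiableAt ℝ g (φ (t, X))) (hg_inv : ∀ Y, g (φ (t, Y)) = Y)
    (hmass : ρ₀ X = ρ (t, φ (t, X)) * (F t X).det)
    (hp : DifferentiableAt ℝ (fun x => p (t, x)) (φ (t, X))) (a : ι) :
    (ρ₀ X * fderiv ℝ (fun y => fderiv ℝ φ y (1, 0) a) (t, X) (1, 0)
        + ∑ i, fderiv ℝ (fun Y => p (t, φ (t, Y)) * (F t Y).adjugate i a) X (Pi.single i 1)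
        = -(ρ₀ X) * fderiv ℝ Pot (φ (t, X)) (Pi.single a 1))
    ↔ ρ (t, φ (t, X)) * (fderiv ℝ u (t, φ (t, X)) (1, 0) a
          + ∑ b, u (t, φ (t, X)) b * fderiv ℝ u (t, φ (t, X)) (0, Pi.single b 1) a)
        = -(fderiv ℝ (fun y => p (t, y)) (φ (t, X)) (Pi.single a 1))
          - ρ (t, φ (t, X)) * fderiv ℝ Pot (φ (t, X)) (Pi.single a 1) := by
  have hψ : ContDiff ℝ 2 fun Z => φ (t, Z) := hφ.comp (contDiff_const.prodMk contDiff_id)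
  have hF' : F t = fderivMatrix fun Z => φ (t, Z) := funext fun Y => by
    ext b i
    rw [hF, fderivMatrix, of_apply,
      fderiv_comp_prodMk_right_apply (hφ.differentiable two_ne_zero _)]
  have hJ : (F t X).det ≠ 0 := by
    rw [hF']
    exact det_fderivMatrix_ne_zero_of_leftInverse hg (hψ.differentiable two_ne_zero X) hg_inv
  rw [fderiv_timeDeriv_eq_materialDeriv (hφ.differentiable two_ne_zero _) hu hflow, hF',
    sum_fderiv_mul_adjugate_fderivMatrix hψ hp, ← hF', hmass]
  constructor
  · intro h
    refine mul_left_cancel₀ hJ ?_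
    linear_combination h
  · intro h
    linear_combination (F t X).det * h

end Real

theorem material_iff_eulerian_barotropic_momentum_general
    (n : ℕ)
    (φ : ℝ × (Fin n → ℝ) → (Fin n → ℝ)) (hφ : ContDiff ℝ 2 φ)
    (u : ℝ × (Fin n → ℝ) → (Fin n → ℝ)) (hu : ContDiff ℝ 1 u)
    (hflow : ∀ (t : ℝ) (X : Fin n → ℝ), fderiv ℝ φ (t, X) (1, 0) = u (t, φ (t, X)))
    (F : ℝ → (Fin n → ℝ) → Matrix (Fin n) (Fin n) ℝ)
    (hF : ∀ t X a i, F t X a i = fderiv ℝ φ (t, X) (0, Pi.single i 1) a)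
    (hdiffeo : ∀ t : ℝ, ∃ e : (Fin n → ℝ) ≃ (Fin n → ℝ),
      (∀ X, e X = φ (t, X)) ∧ ContDiff ℝ 2 (e.symm : (Fin n → ℝ) → (Fin n → ℝ)))
    (ρ₀ : (Fin n → ℝ) → ℝ) (ρ : ℝ × (Fin n → ℝ) → ℝ)
    (hmass : ∀ (t : ℝ) (X : Fin n → ℝ), ρ₀ X = ρ (t, φ (t, X)) * (F t X).det)
    (p : ℝ × (Fin n → ℝ) → ℝ) (hp : ∀ t : ℝ, ContDiff ℝ 1 (fun x => p (t, x)))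
    (Pot : (Fin n → ℝ) → ℝ) :
    (∀ (t : ℝ) (X : Fin n → ℝ) (a : Fin n),
        ρ₀ X * fderiv ℝ (fun y : ℝ × (Fin n → ℝ) => fderiv ℝ φ y (1, 0) a) (t, X) (1, 0)
          + ∑ i : Fin n,
              fderiv ℝ (fun Y => p (t, φ (t, Y)) * (F t Y).adjugate i a) X (Pi.single i 1)
          = -(ρ₀ X) * fderiv ℝ Pot (φ (t, X)) (Pi.single a 1))
    ↔
    (∀ (t : ℝ) (x : Fin n → ℝ) (a : Fin n),
        ρ (t, x) *
            (fderiv ℝ u (t, x) (1, 0) a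
              + ∑ b : Fin n, u (t, x) b * fderiv ℝ u (t, x) (0, Pi.single b 1) a)
          = -(fderiv ℝ (fun y => p (t, y)) x (Pi.single a 1))
            - ρ (t, x) * fderiv ℝ Pot x (Pi.single a 1)) := by
  choose e he he_symm using hdiffeo
  have hmomentum (t : ℝ) (X : Fin n → ℝ) (a : Fin n) :=
    material_momentum_iff_eulerian_momentum_at (Pot := Pot) (a := a) hφ
      (hu.differentiable one_ne_zero _) hflow (hF t) ((he_symm t).differentiable two_ne_zero _)
      (fun Y => by rw [← he, Equiv.symm_apply_apply]) (hmass t X)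
      ((hp t).differentiable one_ne_zero _)
  constructor
  · intro hmaterial t x a
    have hx : φ (t, (e t).symm x) = x := by rw [← he, Equiv.apply_symm_apply]
    simpa only [hx] using (hmomentum t ((e t).symm x) a).1 (hmaterial t ((e t).symm x) a)
  · exact fun heulerian t X a => (hmomentum t X a).2 (heulerian t (φ (t, X)) a)

/-- **Equivalence of material and Eulerian barotropic momentum equations**: in the
continuum setup, with each `φ(t,·)` a C² diffeomorphism, mass relation
`ρ₀(X) = ρ(t, φ(t,X)) · det F(t,X)`, pressure `p` C¹ in `x` and potential `Π` C¹,
the material momentum equation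
`ρ₀ ∂²φᵃ/∂t² + ∑ᵢ ∂/∂Xⁱ [ p∘φ · (adj F)_{i a} ] = -ρ₀ (∂Π/∂xᵃ)∘φ`
holds everywhere iff the Eulerian momentum equation
`ρ (∂u/∂t + (u·∇)u) = -∇p - ρ ∇Π` holds everywhere. -/
theorem material_iff_eulerian_barotropic_momentum
    (n : ℕ) (hn : 1 ≤ n)
    (φ : ℝ × (Fin n → ℝ) → (Fin n → ℝ)) (hφ : ContDiff ℝ 2 φ)
    (u : ℝ × (Fin n → ℝ) → (Fin n → ℝ)) (hu : ContDiff ℝ 1 u)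
    (hflow : ∀ (t : ℝ) (X : Fin n → ℝ), fderiv ℝ φ (t, X) (1, 0) = u (t, φ (t, X)))
    (F : ℝ → (Fin n → ℝ) → Matrix (Fin n) (Fin n) ℝ)
    (hF : ∀ t X a i, F t X a i = fderiv ℝ φ (t, X) (0, Pi.single i 1) a)
    (hdiffeo : ∀ t : ℝ, ∃ e : (Fin n → ℝ) ≃ (Fin n → ℝ),
      (∀ X, e X = φ (t, X)) ∧ ContDiff ℝ 2 (e.symm : (Fin n → ℝ) → (Fin n → ℝ)))
    (ρ₀ : (Fin n → ℝ) → ℝ) (ρ : ℝ × (Fin n → ℝ) → ℝ)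
    (hmass : ∀ (t : ℝ) (X : Fin n → ℝ), ρ₀ X = ρ (t, φ (t, X)) * (F t X).det)
    (p : ℝ × (Fin n → ℝ) → ℝ) (hp : ∀ t : ℝ, ContDiff ℝ 1 (fun x => p (t, x)))
    (Pot : (Fin n → ℝ) → ℝ) (hPot : ContDiff ℝ 1 Pot) :
    (∀ (t : ℝ) (X : Fin n → ℝ) (a : Fin n),
        ρ₀ X * fderiv ℝ (fun y : ℝ × (Fin n → ℝ) => fderiv ℝ φ y (1, 0) a) (t, X) (1, 0)
          + ∑ i : Fin n,
              fderiv ℝ (fun Y => p (t, φ (t, Y)) * (F t Y).adjugate i a) X (Pi.single i 1)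
          = -(ρ₀ X) * fderiv ℝ Pot (φ (t, X)) (Pi.single a 1))
    ↔
    (∀ (t : ℝ) (x : Fin n → ℝ) (a : Fin n),
        ρ (t, x) *
            (fderiv ℝ u (t, x) (1, 0) a
              + ∑ b : Fin n, u (t, x) b * fderiv ℝ u (t, x) (0, Pi.single b 1) a)
          = -(fderiv ℝ (fun y => p (t, y)) x (Pi.single a 1))
            - ρ (t, x) * fderiv ℝ Pot x (Pi.single a 1)) :=
  material_iff_eulerian_barotropic_momentum_general n φ hφ u hu hflow F hF hdiffeo ρ₀ ρ hmass p hp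
    Pot
end

section
/- Equivalence of material and Eulerian incompressible equations: in the continuum setup, assume in addition that for every t the map φ(t,·) is a C² diffeomorphism of ℝⁿ, that det F(t,X) = 1 for all (t,X), that ρ₀ : ℝⁿ → ℝ and the continuously differentiable ρ : ℝ × ℝⁿ → ℝ satisfy ρ₀(X) = ρ(t, φ(t,X)) for all (t,X), that p, λ : ℝ × ℝⁿ → ℝ are continuously differentiable in x, and that Π : ℝⁿ → ℝ is continuously differentiable. Then: (i) div_x u = 0 and ∂ρ/∂t + u·∇_x ρ = 0 hold at every (t,x); and (ii) the constrained material equation — for all (t,X) and each a: ρ₀(X) ∂²φᵃ/∂t²(t,X) + Σ_{i=1}^{n} ∂/∂Xⁱ [ (p+λ)(t, φ(t,X)) (adj F(t,X))_{i a} ] = −ρ₀(X) (∂Π/∂xᵃ)(φ(t,X)) — holds if and only if ρ(∂u/∂t + (u·∇_x)u) = −∇_x(p+λ) − ρ ∇_x Π holds at every (t,x) ∈ ℝ × ℝⁿ. -/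
/-!
Along a trajectory, the chain rule turns `∂ₜφ = u ∘ φ` into `∂ₜF = (∇u) F` and
`∂ₜ²φ = ∂ₜu + (u·∇)u` at `x = φ(t,X)`, and turns `ρ₀ = ρ ∘ φ` into the transport equation.
Jacobi's formula gives `∂ₜ det F = (div u) det F`, so `det F ≡ 1` forces `div u = 0`.
For the pressure term, the Piola identity `∑ᵢ ∂ᵢ (adj F)ᵢₐ = 0` (symmetric second derivatives
paired against the antisymmetry of the determinant) together with `F · adj F = det F • 1` turns
`∑ᵢ ∂ᵢ [(p + λ)(φ) (adj F)ᵢₐ]` into `∂ₐ(p + λ)` evaluated at `φ(t,X)`. Since every `φ(t,·)` is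
onto, the material and the Eulerian momentum equations are then the same identity.
-/

open Matrix Finset

namespace Matrix

variable {R : Type*} [CommRing R] {ι : Type*} [Fintype ι] [DecidableEq ι]

theorem sum_det_updateRow_mul_self (A M : Matrix ι ι R) :
    ∑ b, (M.updateRow b ((A * M) b)).det = A.trace * M.det := by
  have hrow : ∀ b, (A * M) b = ∑ c, A b c • M c := fun b => by
    ext j
    simp [mul_apply, Finset.sum_apply]
  simp only [hrow, det_updateRow_sum, smul_eq_mul, trace, diag, Finset.sum_mul]

theorem det_updateRow_sum_smul (M : Matrix ι ι R) (b : ι) (c : ι → R) (v : ι → ι → R) :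
    (M.updateRow b (∑ j, c j • v j)).det = ∑ j, c j * (M.updateRow b (v j)).det := by
  simp only [← det_updateRow_smul]
  exact (detRowAlternating : (ι → R) [⋀^ι]→ₗ[R] R).toMultilinearMap.map_update_sum _ _ _ _

theorem det_updateRow_updateRow_swap_s8 (M : Matrix ι ι R) {a b : ι} (hab : a ≠ b) (x y : ι → R) :
    ((M.updateRow a x).updateRow b y).det = -((M.updateRow a y).updateRow b x).det := by
  have hswap : (M.updateRow a x).updateRow b y =
      ((M.updateRow a y).updateRow b x) ∘ Equiv.swap a b := by
    ext r c
    change _ = ((M.updateRow a y).updateRow b x) (Equiv.swap a b r) c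
    simp only [updateRow_apply, Equiv.swap_apply_def]
    split_ifs <;> simp_all
  rw [hswap]
  exact (detRowAlternating : (ι → R) [⋀^ι]→ₗ[R] R).map_swap _ hab

theorem sum_det_updateRow_updateRow_single_eq_zero [NoZeroDivisors R] [CharZero R]
    (M S : Matrix ι ι R) (hS : S.IsSymm) {a b : ι} (hab : a ≠ b) :
    ∑ i, ((M.updateRow a (Pi.single i 1)).updateRow b (S i)).det = 0 := by
  set D : ι → ι → R := fun i j =>
    ((M.updateRow a (Pi.single i 1)).updateRow b (Pi.single j 1)).det
  have hexpand : ∀ i, ((M.updateRow a (Pi.single i 1)).updateRow b (S i)).det =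
      ∑ j, S i j * D i j := fun i => by
    conv_lhs => rw [pi_eq_sum_univ' (S i)]
    exact det_updateRow_sum_smul _ _ _ _
  have hD : ∀ i j, D i j = -D j i := fun i j => det_updateRow_updateRow_swap_s8 _ hab _ _
  have hneg : ∑ i, ∑ j, S i j * D i j = -∑ i, ∑ j, S i j * D i j := by
    calc ∑ i, ∑ j, S i j * D i j = ∑ i, ∑ j, S j i * D j i := Finset.sum_comm
      _ = ∑ i, ∑ j, -(S i j * D i j) :=
          Finset.sum_congr rfl fun i _ => Finset.sum_congr rfl fun j _ => by
            rw [hS.apply i j, hD j i, mul_neg]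
      _ = -∑ i, ∑ j, S i j * D i j := by simp only [Finset.sum_neg_distrib]
  simpa only [hexpand] using self_eq_neg.mp hneg

end Matrix

section Jacobi

variable {𝕜 : Type*} [NontriviallyNormedField 𝕜] {ι : Type*}
  {E : Type*} [NormedAddCommGroup E] [NormedSpace 𝕜 E]

theorem hasFDerivAt_fderiv_row {κ : Type*} [Fintype κ] {f : E → κ → 𝕜} {x : E}
    (hf : DifferentiableAt 𝕜 (fderiv 𝕜 f) x) (w : ι → E) (b : κ) :
    HasFDerivAt (fun y i => fderiv 𝕜 f y (w i) b)
      (ContinuousLinearMap.pi fun i => (ContinuousLinearMap.proj b).comp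
        ((ContinuousLinearMap.apply 𝕜 (κ → 𝕜) (w i)).comp (fderiv 𝕜 (fderiv 𝕜 f) x))) x :=
  hasFDerivAt_pi.2 fun i =>
    (ContinuousLinearMap.proj b : (κ → 𝕜) →L[𝕜] 𝕜).hasFDerivAt.comp x
    ((ContinuousLinearMap.apply 𝕜 (κ → 𝕜) (w i)).hasFDerivAt.comp x hf.hasFDerivAt)

variable [Fintype ι] [DecidableEq ι]

noncomputable def Matrix.detRowContinuousMultilinearMap :
    ContinuousMultilinearMap 𝕜 (fun _ : ι => ι → 𝕜) 𝕜 :=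
  { (detRowAlternating : (ι → 𝕜) [⋀^ι]→ₗ[𝕜] 𝕜).toMultilinearMap with
    cont := continuous_id.matrix_det }

@[simp]
theorem Matrix.detRowContinuousMultilinearMap_linearDeriv_apply (M m : ι → ι → 𝕜) :
    (detRowContinuousMultilinearMap (𝕜 := 𝕜)).linearDeriv M m =
      ∑ b, ((of M).updateRow b (m b)).det := by
  rw [ContinuousMultilinearMap.linearDeriv_apply]
  rfl

theorem hasFDerivAt_det_of {r : E → ι → ι → 𝕜} {r' : ι → E →L[𝕜] (ι → 𝕜)} {x : E}
    (h : ∀ b, HasFDerivAt (fun y => r y b) (r' b) x) :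
    HasFDerivAt (fun y => (of (r y)).det)
      ((detRowContinuousMultilinearMap.linearDeriv (r x)).comp (ContinuousLinearMap.pi r')) x :=
  (detRowContinuousMultilinearMap.hasFDerivAt (r x)).comp x (hasFDerivAt_pi.2 h)

theorem hasFDerivAt_adjugate_of {r : E → ι → ι → 𝕜} {r' : ι → E →L[𝕜] (ι → 𝕜)} {x : E}
    (h : ∀ b, HasFDerivAt (fun y => r y b) (r' b) x) (i a : ι) :
    HasFDerivAt (fun y => (of (r y)).adjugate i a)
      ((detRowContinuousMultilinearMap.linearDeriv (Function.update (r x) a (Pi.single i 1))).comp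
        (ContinuousLinearMap.pi (Function.update r' a 0))) x := by
  have hcof : (fun y => (of (r y)).adjugate i a) =
      fun y => (of (Function.update (r y) a (Pi.single i 1))).det := by
    funext y
    rw [adjugate_apply]
    rfl
  rw [hcof]
  refine hasFDerivAt_det_of fun b => ?_
  rcases eq_or_ne b a with rfl | hb
  · simp only [Function.update_self]
    exact hasFDerivAt_const _ _
  · simp only [Function.update_of_ne hb]
    exact h b

end Jacobi

section Jacobian

variable {ι : Type*} [Fintype ι] [DecidableEq ι]

noncomputable def jacobian (Φ : (ι → ℝ) → ι → ℝ) (X : ι → ℝ) : Matrix ι ι ℝ :=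
  LinearMap.toMatrix' (fderiv ℝ Φ X : (ι → ℝ) →ₗ[ℝ] ι → ℝ)

theorem jacobian_apply (Φ : (ι → ℝ) → ι → ℝ) (X : ι → ℝ) (a i : ι) :
    jacobian Φ X a i = fderiv ℝ Φ X (Pi.single i 1) a := rfl

theorem hasFDerivAt_jacobian_adjugate {Φ : (ι → ℝ) → ι → ℝ} {X : ι → ℝ}
    (hΦ : DifferentiableAt ℝ (fderiv ℝ Φ) X) (i a : ι) :
    HasFDerivAt (fun Y => (jacobian Φ Y).adjugate i a)
      ((detRowContinuousMultilinearMap.linearDeriv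
          (Function.update (jacobian Φ X) a (Pi.single i 1))).comp
        (ContinuousLinearMap.pi (Function.update (fun b => ContinuousLinearMap.pi fun j =>
          (ContinuousLinearMap.proj b).comp ((ContinuousLinearMap.apply ℝ (ι → ℝ)
            (Pi.single j 1)).comp (fderiv ℝ (fderiv ℝ Φ) X))) a 0))) X :=
  hasFDerivAt_adjugate_of (r := fun Y => jacobian Φ Y)
    (fun b => hasFDerivAt_fderiv_row hΦ (fun j => Pi.single j 1) b) i a

/-- The Piola identity. -/
theorem sum_fderiv_jacobian_adjugate_eq_zero {Φ : (ι → ℝ) → ι → ℝ} (hΦ : ContDiff ℝ 2 Φ)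
    (X : ι → ℝ) (a : ι) :
    ∑ i, fderiv ℝ (fun Y => (jacobian Φ Y).adjugate i a) X (Pi.single i 1) = 0 := by
  have hD : DifferentiableAt ℝ (fderiv ℝ Φ) X :=
    (hΦ.fderiv_right (m := 1) le_rfl).differentiable one_ne_zero X
  have hsymm : IsSymmSndFDerivAt ℝ Φ X :=
    hΦ.contDiffAt.isSymmSndFDerivAt (by simp [minSmoothness_of_isRCLikeNormedField])
  simp only [fun i => (hasFDerivAt_jacobian_adjugate hD i a).fderiv,
    ContinuousLinearMap.comp_apply, detRowContinuousMultilinearMap_linearDeriv_apply]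
  rw [Finset.sum_comm]
  refine Finset.sum_eq_zero fun b _ => ?_
  rcases eq_or_ne b a with rfl | hb
  · refine Finset.sum_eq_zero fun i _ => det_eq_zero_of_row_eq_zero b fun j => ?_
    simp
  · have hS : (of fun i j => fderiv ℝ (fderiv ℝ Φ) X (Pi.single i 1) (Pi.single j 1) b).IsSymm :=
      IsSymm.ext fun i j => congrFun (hsymm _ _) b
    refine (Finset.sum_congr rfl fun i _ => ?_).trans
      (sum_det_updateRow_updateRow_single_eq_zero (jacobian Φ X) _ hS hb.symm)
    simp only [ContinuousLinearMap.coe_pi', Function.update_of_ne hb,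
      ContinuousLinearMap.comp_apply, ContinuousLinearMap.apply_apply,
      ContinuousLinearMap.proj_apply]
    rfl

theorem sum_fderiv_comp_mul_jacobian_adjugate {Φ : (ι → ℝ) → ι → ℝ} {q : (ι → ℝ) → ℝ}
    {X : ι → ℝ} (hΦ : DifferentiableAt ℝ Φ X) (hq : DifferentiableAt ℝ q (Φ X)) (a : ι) :
    ∑ i, fderiv ℝ (fun Y => q (Φ Y)) X (Pi.single i 1) * (jacobian Φ X).adjugate i a =
      (jacobian Φ X).det * fderiv ℝ q (Φ X) (Pi.single a 1) := by
  set g : ι → ℝ := fun b => fderiv ℝ q (Φ X) (Pi.single b 1)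
  have hchain : (fun i => fderiv ℝ (fun Y => q (Φ Y)) X (Pi.single i 1)) = g ᵥ* jacobian Φ X := by
    funext i
    rw [fderiv_fun_comp X hq hΦ, ContinuousLinearMap.comp_apply]
    conv_lhs => rw [pi_eq_sum_univ' (fderiv ℝ Φ X (Pi.single i 1))]
    simp [vecMul, dotProduct, jacobian_apply, g, mul_comm]
  calc ∑ i, fderiv ℝ (fun Y => q (Φ Y)) X (Pi.single i 1) * (jacobian Φ X).adjugate i a
      = ((g ᵥ* jacobian Φ X) ᵥ* (jacobian Φ X).adjugate) a := by rw [← hchain]; rfl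
    _ = (jacobian Φ X).det * g a := by
      rw [vecMul_vecMul, mul_adjugate, vecMul_smul, vecMul_one]
      rfl

theorem sum_fderiv_mul_jacobian_adjugate {Φ : (ι → ℝ) → ι → ℝ} {q : (ι → ℝ) → ℝ}
    {X : ι → ℝ} (hΦ : ContDiff ℝ 2 Φ) (hq : DifferentiableAt ℝ q (Φ X)) (a : ι) :
    ∑ i, fderiv ℝ (fun Y => q (Φ Y) * (jacobian Φ Y).adjugate i a) X (Pi.single i 1) =
      (jacobian Φ X).det * fderiv ℝ q (Φ X) (Pi.single a 1) := by
  have hD : DifferentiableAt ℝ (fderiv ℝ Φ) X :=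
    (hΦ.fderiv_right (m := 1) le_rfl).differentiable one_ne_zero X
  have hqΦ : DifferentiableAt ℝ (fun Y => q (Φ Y)) X := hq.comp X (hΦ.differentiable two_ne_zero X)
  have hprod : ∀ i, fderiv ℝ (fun Y => q (Φ Y) * (jacobian Φ Y).adjugate i a) X (Pi.single i 1) =
      q (Φ X) * fderiv ℝ (fun Y => (jacobian Φ Y).adjugate i a) X (Pi.single i 1) +
        fderiv ℝ (fun Y => q (Φ Y)) X (Pi.single i 1) * (jacobian Φ X).adjugate i a := fun i => by
    rw [fderiv_fun_mul hqΦ (hasFDerivAt_jacobian_adjugate hD i a).differentiableAt]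
    simp [mul_comm]
  simp only [hprod, sum_add_distrib, ← mul_sum, sum_fderiv_jacobian_adjugate_eq_zero hΦ,
    mul_zero, zero_add]
  exact sum_fderiv_comp_mul_jacobian_adjugate (hΦ.differentiable two_ne_zero X) hq a

end Jacobian

section Flow

variable {E F : Type*} [NormedAddCommGroup E] [NormedSpace ℝ E] [NormedAddCommGroup F]
  [NormedSpace ℝ F] {φ : ℝ × E → F} {u : ℝ × F → F}

theorem hasFDerivAt_fderiv_time (hflow : ∀ y, fderiv ℝ φ y (1, 0) = u (y.1, φ y)) {y : ℝ × E}
    (hφ : DifferentiableAt ℝ φ y) (hu : DifferentiableAt ℝ u (y.1, φ y)) :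
    HasFDerivAt (fun z => fderiv ℝ φ z (1, 0))
      ((fderiv ℝ u (y.1, φ y)).comp ((ContinuousLinearMap.fst ℝ ℝ E).prod (fderiv ℝ φ y))) y := by
  rw [funext hflow]
  exact hu.hasFDerivAt.comp y (hasFDerivAt_fst.prodMk hφ.hasFDerivAt)

theorem fderiv_fderiv_apply_time (hflow : ∀ y, fderiv ℝ φ y (1, 0) = u (y.1, φ y))
    {y : ℝ × E} (hφ : DifferentiableAt ℝ φ y) (hφ' : DifferentiableAt ℝ (fderiv ℝ φ) y)
    (hu : DifferentiableAt ℝ u (y.1, φ y)) (v : ℝ × E) :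
    fderiv ℝ (fderiv ℝ φ) y v (1, 0) = fderiv ℝ u (y.1, φ y) (v.1, fderiv ℝ φ y v) := by
  have happly := (ContinuousLinearMap.apply ℝ F ((1 : ℝ), (0 : E))).hasFDerivAt.comp y
    hφ'.hasFDerivAt
  exact congrArg (· v) (happly.unique (hasFDerivAt_fderiv_time hflow hφ hu))

theorem fderiv_apply_one_velocity_eq_zero {ρ : ℝ × F → ℝ} {c : ℝ} {X : E} {t : ℝ}
    (hflow : ∀ y, fderiv ℝ φ y (1, 0) = u (y.1, φ y)) (hφ : DifferentiableAt ℝ φ (t, X))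
    (hρ : DifferentiableAt ℝ ρ (t, φ (t, X))) (hconst : ∀ s, ρ (s, φ (s, X)) = c) :
    fderiv ℝ ρ (t, φ (t, X)) (1, u (t, φ (t, X))) = 0 := by
  have hpath : HasDerivAt (fun s => (s, φ (s, X))) (1, u (t, φ (t, X))) t := by
    rw [← hflow (t, X)]
    exact (hasDerivAt_id t).prodMk
      (hφ.hasFDerivAt.comp_hasDerivAt t ((hasDerivAt_id t).prodMk (hasDerivAt_const t X)))
  have hρpath := hρ.hasFDerivAt.comp_hasDerivAt t hpath
  rw [show (ρ ∘ fun s => (s, φ (s, X))) = fun _ => c from funext hconst] at hρpath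
  exact hρpath.unique (hasDerivAt_const t c)

end Flow

section EulerianFlow

variable {ι : Type*} [Fintype ι] [DecidableEq ι]

theorem ContinuousLinearMap.apply_prodMk_eq_sum {G : Type*} [NormedAddCommGroup G]
    [NormedSpace ℝ G] (T : ℝ × (ι → ℝ) →L[ℝ] G) (s : ℝ) (w : ι → ℝ) :
    T (s, w) = s • T (1, 0) + ∑ b, w b • T (0, Pi.single b 1) := by
  have hsplit : ((s, w) : ℝ × (ι → ℝ)) = s • (1, 0) + ∑ b, w b • ((0 : ℝ), Pi.single b 1) := by
    ext
    · simp [Prod.fst_sum]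
    · simp [Prod.snd_sum, ← pi_eq_sum_univ']
  rw [hsplit]
  simp only [map_add, map_smul, map_sum]

noncomputable def spatialJacobian (f : ℝ × (ι → ℝ) → ι → ℝ) (y : ℝ × (ι → ℝ)) :
    Matrix ι ι ℝ :=
  of fun a i => fderiv ℝ f y (0, Pi.single i 1) a

theorem jacobian_prodMk_eq_spatialJacobian {f : ℝ × (ι → ℝ) → ι → ℝ} {t : ℝ} {X : ι → ℝ}
    (hf : DifferentiableAt ℝ f (t, X)) :
    jacobian (fun Y => f (t, Y)) X = spatialJacobian f (t, X) := by
  have h : HasFDerivAt (fun Y => f (t, Y))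
      ((fderiv ℝ f (t, X)).comp (ContinuousLinearMap.inr ℝ ℝ (ι → ℝ))) X :=
    hf.hasFDerivAt.comp X (hasFDerivAt_prodMk_right t X)
  ext a i
  rw [jacobian_apply, h.fderiv]
  rfl

variable {φ u : ℝ × (ι → ℝ) → ι → ℝ} {y : ℝ × (ι → ℝ)}

theorem fderiv_fderiv_time_spatial (hφ : ContDiff ℝ 2 φ)
    (hflow : ∀ y, fderiv ℝ φ y (1, 0) = u (y.1, φ y)) (hu : DifferentiableAt ℝ u (y.1, φ y))
    (b i : ι) :
    fderiv ℝ (fderiv ℝ φ) y (1, 0) (0, Pi.single i 1) b =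
      (spatialJacobian u (y.1, φ y) * spatialJacobian φ y) b i := by
  have hD : DifferentiableAt ℝ (fderiv ℝ φ) y :=
    (hφ.fderiv_right (m := 1) le_rfl).differentiable one_ne_zero y
  have hsymm : IsSymmSndFDerivAt ℝ φ y :=
    hφ.contDiffAt.isSymmSndFDerivAt (by simp [minSmoothness_of_isRCLikeNormedField])
  rw [hsymm, fderiv_fderiv_apply_time hflow (hφ.differentiable two_ne_zero y) hD hu,
    ContinuousLinearMap.apply_prodMk_eq_sum]
  simp [mul_apply, spatialJacobian, mul_comm]

theorem fderiv_det_spatialJacobian_time (hφ : ContDiff ℝ 2 φ)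
    (hflow : ∀ y, fderiv ℝ φ y (1, 0) = u (y.1, φ y)) (hu : DifferentiableAt ℝ u (y.1, φ y)) :
    fderiv ℝ (fun z => (spatialJacobian φ z).det) y (1, 0) =
      (spatialJacobian u (y.1, φ y)).trace * (spatialJacobian φ y).det := by
  have hD : DifferentiableAt ℝ (fderiv ℝ φ) y :=
    (hφ.fderiv_right (m := 1) le_rfl).differentiable one_ne_zero y
  have hdet : HasFDerivAt (fun z => (spatialJacobian φ z).det) _ y :=
    hasFDerivAt_det_of fun b => hasFDerivAt_fderiv_row hD (fun i => ((0 : ℝ), Pi.single i 1)) b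
  rw [hdet.fderiv, ← sum_det_updateRow_mul_self]
  simp only [ContinuousLinearMap.comp_apply, detRowContinuousMultilinearMap_linearDeriv_apply]
  refine Finset.sum_congr rfl fun b _ => ?_
  congr 2
  funext i
  exact fderiv_fderiv_time_spatial hφ hflow hu b i

theorem fderiv_fderiv_time_apply_time (hflow : ∀ y, fderiv ℝ φ y (1, 0) = u (y.1, φ y))
    (hφ : DifferentiableAt ℝ φ y) (hu : DifferentiableAt ℝ u (y.1, φ y)) (a : ι) :
    fderiv ℝ (fun z => fderiv ℝ φ z (1, 0) a) y (1, 0) =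
      fderiv ℝ u (y.1, φ y) (1, 0) a +
        ∑ b, u (y.1, φ y) b * fderiv ℝ u (y.1, φ y) (0, Pi.single b 1) a := by
  have h : HasFDerivAt (fun z => fderiv ℝ φ z (1, 0) a) _ y :=
    (ContinuousLinearMap.proj a : (ι → ℝ) →L[ℝ] ℝ).hasFDerivAt.comp y
      (hasFDerivAt_fderiv_time hflow hφ hu)
  rw [h.fderiv]
  simp only [ContinuousLinearMap.comp_apply, ContinuousLinearMap.prod_apply,
    ContinuousLinearMap.coe_fst', hflow y]
  rw [ContinuousLinearMap.apply_prodMk_eq_sum]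
  simp

end EulerianFlow

theorem material_iff_eulerian_incompressible_general
    (n : ℕ)
    (φ : ℝ × (Fin n → ℝ) → (Fin n → ℝ)) (hφ : ContDiff ℝ 2 φ)
    (u : ℝ × (Fin n → ℝ) → (Fin n → ℝ)) (hu : ContDiff ℝ 1 u)
    (hflow : ∀ (t : ℝ) (X : Fin n → ℝ), fderiv ℝ φ (t, X) (1, 0) = u (t, φ (t, X)))
    (F : ℝ → (Fin n → ℝ) → Matrix (Fin n) (Fin n) ℝ)
    (hF : ∀ t X a i, F t X a i = fderiv ℝ φ (t, X) (0, Pi.single i 1) a)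
    (hdiffeo : ∀ t : ℝ, ∃ e : (Fin n → ℝ) ≃ (Fin n → ℝ),
      (∀ X, e X = φ (t, X)) ∧ ContDiff ℝ 2 (e.symm : (Fin n → ℝ) → (Fin n → ℝ)))
    (hincomp : ∀ (t : ℝ) (X : Fin n → ℝ), (F t X).det = 1)
    (ρ₀ : (Fin n → ℝ) → ℝ) (ρ : ℝ × (Fin n → ℝ) → ℝ) (hρ : ContDiff ℝ 1 ρ)
    (hmass : ∀ (t : ℝ) (X : Fin n → ℝ), ρ₀ X = ρ (t, φ (t, X)))
    (p lam : ℝ × (Fin n → ℝ) → ℝ)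
    (hp : ∀ t : ℝ, ContDiff ℝ 1 (fun x => p (t, x)))
    (hlam : ∀ t : ℝ, ContDiff ℝ 1 (fun x => lam (t, x)))
    (Pot : (Fin n → ℝ) → ℝ) :
    (∀ (t : ℝ) (x : Fin n → ℝ),
        (∑ a : Fin n, fderiv ℝ u (t, x) (0, Pi.single a 1) a = 0) ∧
        (fderiv ℝ ρ (t, x) (1, 0)
            + ∑ a : Fin n, u (t, x) a * fderiv ℝ ρ (t, x) (0, Pi.single a 1) = 0))
    ∧
    ((∀ (t : ℝ) (X : Fin n → ℝ) (a : Fin n),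
        ρ₀ X * fderiv ℝ (fun y : ℝ × (Fin n → ℝ) => fderiv ℝ φ y (1, 0) a) (t, X) (1, 0)
          + ∑ i : Fin n,
              fderiv ℝ
                (fun Y => (p (t, φ (t, Y)) + lam (t, φ (t, Y))) * (F t Y).adjugate i a)
                X (Pi.single i 1)
          = -(ρ₀ X) * fderiv ℝ Pot (φ (t, X)) (Pi.single a 1))
      ↔
      (∀ (t : ℝ) (x : Fin n → ℝ) (a : Fin n),
        ρ (t, x) *
            (fderiv ℝ u (t, x) (1, 0) a
              + ∑ b : Fin n, u (t, x) b * fderiv ℝ u (t, x) (0, Pi.single b 1) a)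
          = -(fderiv ℝ (fun y => p (t, y) + lam (t, y)) x (Pi.single a 1))
            - ρ (t, x) * fderiv ℝ Pot x (Pi.single a 1))) := by
  have hφd : Differentiable ℝ φ := hφ.differentiable two_ne_zero
  have hud : Differentiable ℝ u := hu.differentiable one_ne_zero
  have hflow' : ∀ y, fderiv ℝ φ y (1, 0) = u (y.1, φ y) := fun y => hflow y.1 y.2
  have hsurj : ∀ t x, ∃ X, φ (t, X) = x := fun t x => by
    obtain ⟨e, he, -⟩ := hdiffeo t
    exact ⟨e.symm x, by rw [← he, e.apply_symm_apply]⟩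
  have hFφ : ∀ t X, F t X = spatialJacobian φ (t, X) := fun t X => Matrix.ext (hF t X)
  have hdiv : ∀ t X, (spatialJacobian u (t, φ (t, X))).trace = 0 := fun t X => by
    have hdet := fderiv_det_spatialJacobian_time hφ hflow' (hud _) (y := (t, X))
    have hconst : (fun z => (spatialJacobian φ z).det) = fun _ => 1 :=
      funext fun z => by rw [← hFφ, hincomp]
    simpa [hconst, ← hFφ, hincomp] using hdet.symm
  have hpressure : ∀ t X a, ∑ i, fderiv ℝ
      (fun Y => (p (t, φ (t, Y)) + lam (t, φ (t, Y))) * (F t Y).adjugate i a) X (Pi.single i 1)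
        = fderiv ℝ (fun y => p (t, y) + lam (t, y)) (φ (t, X)) (Pi.single a 1) := by
    intro t X a
    have hjac : ∀ Y, F t Y = jacobian (fun Y => φ (t, Y)) Y := fun Y => by
      rw [hFφ, jacobian_prodMk_eq_spatialJacobian (hφd _)]
    simp only [hjac]
    rw [sum_fderiv_mul_jacobian_adjugate (Φ := fun Y => φ (t, Y))
      (q := fun y => p (t, y) + lam (t, y)) (hφ.comp (contDiff_prodMk_right t))
      (((hp t).add (hlam t)).differentiable one_ne_zero _), ← hjac, hincomp, one_mul]
  have hacc : ∀ t X a, fderiv ℝ (fun y => fderiv ℝ φ y (1, 0) a) (t, X) (1, 0) =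
      fderiv ℝ u (t, φ (t, X)) (1, 0) a +
        ∑ b, u (t, φ (t, X)) b * fderiv ℝ u (t, φ (t, X)) (0, Pi.single b 1) a :=
    fun t X a => fderiv_fderiv_time_apply_time hflow' (hφd _) (hud _) a
  refine ⟨fun t x => ?_, ⟨fun hm t x a => ?_, fun he t X a => ?_⟩⟩
  · obtain ⟨X, rfl⟩ := hsurj t x
    refine ⟨hdiv t X, ?_⟩
    have htransport := fderiv_apply_one_velocity_eq_zero (t := t) hflow' (hφd _)
      ((hρ.differentiable one_ne_zero) _) fun s => (hmass s X).symm
    rw [ContinuousLinearMap.apply_prodMk_eq_sum] at htransport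
    simpa using htransport
  · obtain ⟨X, rfl⟩ := hsurj t x
    have h := hm t X a
    rw [hacc, hpressure, hmass t X] at h
    linarith
  · rw [hacc, hpressure, hmass t X]
    linarith [he t (φ (t, X)) a]

/-- **Equivalence of material and Eulerian incompressible equations**: in the continuum
setup with `det F ≡ 1`, each `φ(t,·)` a C² diffeomorphism and `ρ₀(X) = ρ(t, φ(t,X))`,
one has (i) `div_x u = 0` and `∂ρ/∂t + u·∇ρ = 0` everywhere; and (ii) the constrained
material momentum equation with combined pressure `p + λ` holds everywhere iff
`ρ (∂u/∂t + (u·∇)u) = -∇(p+λ) - ρ ∇Π` holds everywhere. -/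
theorem material_iff_eulerian_incompressible
    (n : ℕ) (hn : 1 ≤ n)
    (φ : ℝ × (Fin n → ℝ) → (Fin n → ℝ)) (hφ : ContDiff ℝ 2 φ)
    (u : ℝ × (Fin n → ℝ) → (Fin n → ℝ)) (hu : ContDiff ℝ 1 u)
    (hflow : ∀ (t : ℝ) (X : Fin n → ℝ), fderiv ℝ φ (t, X) (1, 0) = u (t, φ (t, X)))
    (F : ℝ → (Fin n → ℝ) → Matrix (Fin n) (Fin n) ℝ)
    (hF : ∀ t X a i, F t X a i = fderiv ℝ φ (t, X) (0, Pi.single i 1) a)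
    (hdiffeo : ∀ t : ℝ, ∃ e : (Fin n → ℝ) ≃ (Fin n → ℝ),
      (∀ X, e X = φ (t, X)) ∧ ContDiff ℝ 2 (e.symm : (Fin n → ℝ) → (Fin n → ℝ)))
    (hincomp : ∀ (t : ℝ) (X : Fin n → ℝ), (F t X).det = 1)
    (ρ₀ : (Fin n → ℝ) → ℝ) (ρ : ℝ × (Fin n → ℝ) → ℝ) (hρ : ContDiff ℝ 1 ρ)
    (hmass : ∀ (t : ℝ) (X : Fin n → ℝ), ρ₀ X = ρ (t, φ (t, X)))
    (p lam : ℝ × (Fin n → ℝ) → ℝ)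
    (hp : ∀ t : ℝ, ContDiff ℝ 1 (fun x => p (t, x)))
    (hlam : ∀ t : ℝ, ContDiff ℝ 1 (fun x => lam (t, x)))
    (Pot : (Fin n → ℝ) → ℝ) (hPot : ContDiff ℝ 1 Pot) :
    (∀ (t : ℝ) (x : Fin n → ℝ),
        (∑ a : Fin n, fderiv ℝ u (t, x) (0, Pi.single a 1) a = 0) ∧
        (fderiv ℝ ρ (t, x) (1, 0)
            + ∑ a : Fin n, u (t, x) a * fderiv ℝ ρ (t, x) (0, Pi.single a 1) = 0))
    ∧
    ((∀ (t : ℝ) (X : Fin n → ℝ) (a : Fin n),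
        ρ₀ X * fderiv ℝ (fun y : ℝ × (Fin n → ℝ) => fderiv ℝ φ y (1, 0) a) (t, X) (1, 0)
          + ∑ i : Fin n,
              fderiv ℝ
                (fun Y => (p (t, φ (t, Y)) + lam (t, φ (t, Y))) * (F t Y).adjugate i a)
                X (Pi.single i 1)
          = -(ρ₀ X) * fderiv ℝ Pot (φ (t, X)) (Pi.single a 1))
      ↔
      (∀ (t : ℝ) (x : Fin n → ℝ) (a : Fin n),
        ρ (t, x) *
            (fderiv ℝ u (t, x) (1, 0) a
              + ∑ b : Fin n, u (t, x) b * fderiv ℝ u (t, x) (0, Pi.single b 1) a)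
          = -(fderiv ℝ (fun y => p (t, y) + lam (t, y)) x (Pi.single a 1))
            - ρ (t, x) * fderiv ℝ Pot x (Pi.single a 1))) :=
  material_iff_eulerian_incompressible_general n φ hφ u hu hflow F hF hdiffeo hincomp ρ₀ ρ hρ hmass
    p lam hp hlam Pot
end

section
/- Discrete Hamilton principle ⟺ discrete Euler–Lagrange equations (2D): for any discrete field φ and any node (j,a,b) with 0 < j < N, the gradient of the discrete action S with respect to the variable φ^j_{a,b} equals Σ_{(□,p) : (j,a,b) incident to □ in slot p} D_pL(j¹φ(□)). Consequently, φ is a critical point of S with respect to all variations of the node values vanishing at the temporal levels j = 0 and j = N if and only if the discrete Euler–Lagrange node equation holds at every node (j,a,b) with 0 < j < N; in particular, at an interior node (0 < j < N, 0 < a < A, 0 < b < B) this equation reads D₂L(j¹φ(□^{j−1}_{a,b})) + D₄L(j¹φ(□^{j−1}_{a−1,b})) + D₆L(j¹φ(□^{j−1}_{a,b−1})) + D₈L(j¹φ(□^{j−1}_{a−1,b−1})) + D₁L(j¹φ(□^j_{a,b})) + D₃L(j¹φ(□^j_{a−1,b})) + D₅L(j¹φ(□^j_{a,b−1})) + D₇L(j¹φ(□^j_{a−1,b−1}))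 = 0, while at spatial-boundary nodes only the existing incident cells contribute (the discrete natural boundary conditions). -/
noncomputable section

/-- The plane `ℝ²` as a Euclidean space. -/
abbrev E2 : Type := EuclideanSpace ℝ (Fin 2)

/-- Partial gradient `D_pL ∈ ℝ²` of a cell Lagrangian `L` in its `p`-th slot. -/
noncomputable def pgrad {k : ℕ} (L : (Fin k → E2) → ℝ) (x : Fin k → E2) (p : Fin k) : E2 :=
  gradient (fun y => L (Function.update x p y)) (x p)

/-- The node of the cell `□^j_{a,b}` occupied by slot `s` (slots `0,…,7` correspond to
the paper's slots `1,…,8`): slot `s` sits at time `j + s % 2` and spatial node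
`(a + (s/2) % 2, b + s/4)`. -/
def cellNode (j a b : ℕ) (s : Fin 8) : ℕ × ℕ × ℕ :=
  (j + s.val % 2, a + (s.val / 2) % 2, b + s.val / 4)

/-- First jet of the discrete field on the cell `□^j_{a,b}`: the 8-tuple
`(φ^j_{a,b}, φ^{j+1}_{a,b}, φ^j_{a+1,b}, φ^{j+1}_{a+1,b}, φ^j_{a,b+1}, φ^{j+1}_{a,b+1},
φ^j_{a+1,b+1}, φ^{j+1}_{a+1,b+1})`. -/
def jet (φ : ℕ → ℕ → ℕ → E2) (j a b : ℕ) : Fin 8 → E2 :=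
  fun s => φ (j + s.val % 2) (a + (s.val / 2) % 2) (b + s.val / 4)

/-- Sum of `D_pL(j¹φ(□))` over all pairs `(□, p)` such that the given node is incident
to the cell `□` in slot `p`; the discrete Euler–Lagrange node equation asserts this
vanishes. -/
noncomputable def delSum (N A B : ℕ) (L : (Fin 8 → E2) → ℝ) (φ : ℕ → ℕ → ℕ → E2)
    (nd : ℕ × ℕ × ℕ) : E2 :=
  ∑ j' ∈ Finset.range N, ∑ a' ∈ Finset.range A, ∑ b' ∈ Finset.range B, ∑ s : Fin 8,
    if cellNode j' a' b' s = nd then pgrad L (jet φ j' a' b') s else 0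

/-- The discrete action functional `S(φ) = Σ_cells L(j¹φ(□))`. -/
noncomputable def action (N A B : ℕ) (L : (Fin 8 → E2) → ℝ) (φ : ℕ → ℕ → ℕ → E2) : ℝ :=
  ∑ j ∈ Finset.range N, ∑ a ∈ Finset.range A, ∑ b ∈ Finset.range B, L (jet φ j a b)

/-- The field obtained from `φ` by replacing its value at one node by `y`. -/
def updNode (φ : ℕ → ℕ → ℕ → E2) (nd : ℕ × ℕ × ℕ) (y : E2) : ℕ → ℕ → ℕ → E2 :=
  fun j a b => if (j, a, b) = nd then y else φ j a b

/-!
A node value enters the action only through the cells incident to it, and in each of them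
only through the slots it occupies. Hence the chain rule gives the gradient of `S` in a node
value as the sum of the slot gradients `D_pL` over the incident (cell, slot) pairs. Likewise the
first variation in a direction `δ` is a sum over cells and slots of `⟪D_pL, δ⟫`; regrouping it by
nodes gives `Σₙ ⟪delSum n, δ n⟫`, and the variation supported at a single node with `0 < j < N`
in the direction `delSum n` isolates the node equation there.
-/

open InnerProductSpace

section PartialGradient

variable {k : ℕ} {L : (Fin k → E2) → ℝ} {x : Fin k → E2}

theorem inner_pgrad (hL : DifferentiableAt ℝ L x) (p : Fin k) (w : E2) :
    ⟪pgrad L x p, w⟫_ℝ = fderiv ℝ L x (Pi.single p w) := by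
  have hL' : DifferentiableAt ℝ L (Function.update x p (x p)) := by
    rwa [Function.update_eq_self]
  rw [pgrad, inner_gradient_left,
    fderiv_fun_comp _ hL' (hasFDerivAt_update x (x p)).differentiableAt,
    fderiv_update, Function.update_eq_self, ContinuousLinearMap.comp_apply]
  congr 1
  ext i : 1
  rcases eq_or_ne i p with rfl | hip <;> simp [*]

theorem fderiv_apply_eq_sum_inner_pgrad (hL : DifferentiableAt ℝ L x) (v : Fin k → E2) :
    fderiv ℝ L x v = ∑ s, ⟪pgrad L x s, v s⟫_ℝ := by
  conv_lhs => rw [← Finset.univ_sum_single v, map_sum]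
  simp only [inner_pgrad hL]

theorem hasGradientAt_comp_ite (hL : DifferentiableAt ℝ L x) (P : Fin k → Prop)
    [DecidablePred P] {y₀ : E2} (hx : ∀ s, P s → x s = y₀) :
    HasGradientAt (fun y => L fun s => if P s then y else x s)
      (∑ s, if P s then pgrad L x s else 0) y₀ := by
  set D : E2 →L[ℝ] Fin k → E2 := .pi fun s => if P s then .id ℝ E2 else 0
  have hD : HasFDerivAt (fun y s => if P s then y else x s) D y₀ := by
    rw [hasFDerivAt_pi]
    intro s
    by_cases hs : P s <;> simp only [hs, if_true, if_false]
    · exact hasFDerivAt_id y₀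
    · exact hasFDerivAt_const (x s) y₀
  have hxy : (fun s => if P s then y₀ else x s) = x := by
    funext s; split_ifs with hs <;> simp [hx s, hs]
  have hdual : toDual ℝ E2 (∑ s, if P s then pgrad L x s else 0) = (fderiv ℝ L x).comp D := by
    ext w
    rw [toDual_apply_apply, ContinuousLinearMap.comp_apply, fderiv_apply_eq_sum_inner_pgrad hL,
      sum_inner]
    refine Finset.sum_congr rfl fun s _ => ?_
    by_cases hs : P s <;> simp [hs, D]
  rw [hasGradientAt_iff_hasFDerivAt, hdual]
  have hL' : HasFDerivAt L (fderiv ℝ L x) (fun s => if P s then y₀ else x s) := by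
    rw [hxy]; exact hL.hasFDerivAt
  exact hL'.comp y₀ hD

end PartialGradient

theorem HasGradientAt.fun_sum {ι F : Type*} [NormedAddCommGroup F] [InnerProductSpace ℝ F]
    [CompleteSpace F] {t : Finset ι} {f : ι → F → ℝ} {g : ι → F} {x : F}
    (h : ∀ i ∈ t, HasGradientAt (f i) (g i) x) :
    HasGradientAt (fun y => ∑ i ∈ t, f i y) (∑ i ∈ t, g i) x := by
  rw [hasGradientAt_iff_hasFDerivAt, map_sum]
  exact .fun_sum fun i hi => (h i hi).hasFDerivAt

def cells (N A B : ℕ) : Finset (ℕ × ℕ × ℕ) :=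
  Finset.range N ×ˢ Finset.range A ×ˢ Finset.range B

def nodes (N A B : ℕ) : Finset (ℕ × ℕ × ℕ) :=
  cells (N + 1) (A + 1) (B + 1)

theorem sum_cells {M : Type*} [AddCommMonoid M] (N A B : ℕ) (f : ℕ × ℕ × ℕ → M) :
    ∑ c ∈ cells N A B, f c =
      ∑ j ∈ Finset.range N, ∑ a ∈ Finset.range A, ∑ b ∈ Finset.range B, f (j, a, b) := by
  simp only [cells, Finset.sum_product]

theorem cellNode_mem_nodes {N A B : ℕ} {c : ℕ × ℕ × ℕ} (hc : c ∈ cells N A B) (s : Fin 8) :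
    cellNode c.1 c.2.1 c.2.2 s ∈ nodes N A B := by
  simp only [cells, nodes, Finset.mem_product, Finset.mem_range, cellNode] at hc ⊢
  omega

theorem cellNode_eq_iff {j a b : ℕ} {s : Fin 8} (hj : s.val % 2 ≤ j) (ha : s.val / 2 % 2 ≤ a)
    (hb : s.val / 4 ≤ b) (c : ℕ × ℕ × ℕ) :
    cellNode c.1 c.2.1 c.2.2 s = (j, a, b) ↔
      c = (j - s.val % 2, a - s.val / 2 % 2, b - s.val / 4) := by
  obtain ⟨j', a', b'⟩ := c
  simp only [cellNode, Prod.mk.injEq]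
  omega

variable {N A B : ℕ} {L : (Fin 8 → E2) → ℝ}

theorem hasGradientAt_action_updNode (hL : Differentiable ℝ L) (φ : ℕ → ℕ → ℕ → E2)
    (nd : ℕ × ℕ × ℕ) :
    HasGradientAt (fun y => action N A B L (updNode φ nd y)) (delSum N A B L φ nd)
      (φ nd.1 nd.2.1 nd.2.2) :=
  .fun_sum fun j _ => .fun_sum fun a _ => .fun_sum fun b _ =>
    hasGradientAt_comp_ite (hL _) _ fun s hs => by subst hs; rfl

theorem delSum_eq_sum_cells (φ : ℕ → ℕ → ℕ → E2) (nd : ℕ × ℕ × ℕ) :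
    delSum N A B L φ nd = ∑ c ∈ cells N A B, ∑ s,
      if cellNode c.1 c.2.1 c.2.2 s = nd then pgrad L (jet φ c.1 c.2.1 c.2.2) s else 0 := by
  rw [delSum, sum_cells]

theorem sum_nodes_inner_delSum (φ δ : ℕ → ℕ → ℕ → E2) :
    ∑ nd ∈ nodes N A B, ⟪delSum N A B L φ nd, δ nd.1 nd.2.1 nd.2.2⟫_ℝ =
      ∑ c ∈ cells N A B, ∑ s, ⟪pgrad L (jet φ c.1 c.2.1 c.2.2) s, jet δ c.1 c.2.1 c.2.2 s⟫_ℝ := by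
  simp only [delSum_eq_sum_cells, sum_inner]
  rw [Finset.sum_comm]
  refine Finset.sum_congr rfl fun c hc => ?_
  rw [Finset.sum_comm]
  refine Finset.sum_congr rfl fun s _ => ?_
  rw [Finset.sum_eq_single_of_mem _ (cellNode_mem_nodes hc s) fun nd _ hnd => by
    rw [if_neg (Ne.symm hnd), inner_zero_left], if_pos rfl]
  rfl

theorem hasDerivAt_action_add_smul (hL : Differentiable ℝ L) (φ δ : ℕ → ℕ → ℕ → E2) :
    HasDerivAt (fun ε : ℝ => action N A B L (fun j a b => φ j a b + ε • δ j a b))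
      (∑ nd ∈ nodes N A B, ⟪delSum N A B L φ nd, δ nd.1 nd.2.1 nd.2.2⟫_ℝ) 0 := by
  rw [sum_nodes_inner_delSum, sum_cells]
  refine .fun_sum fun j _ => .fun_sum fun a _ => .fun_sum fun b _ => ?_
  rw [← fderiv_apply_eq_sum_inner_pgrad (hL _)]
  have hline : HasDerivAt (fun ε : ℝ => jet φ j a b + ε • jet δ j a b) (jet δ j a b) 0 := by
    simpa using ((hasDerivAt_id (0 : ℝ)).smul_const (jet δ j a b)).const_add (jet φ j a b)
  have h := (hL _).hasFDerivAt.comp_hasDerivAt 0 hline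
  rw [zero_smul, add_zero] at h
  exact h

theorem hamilton_iff_delSum_eq_zero (hL : Differentiable ℝ L) (φ : ℕ → ℕ → ℕ → E2) :
    (∀ δ : ℕ → ℕ → ℕ → E2, (∀ a b, δ 0 a b = 0) → (∀ a b, δ N a b = 0) →
        deriv (fun ε : ℝ => action N A B L (fun j a b => φ j a b + ε • δ j a b)) 0 = 0) ↔
      ∀ j a b : ℕ, 0 < j → j < N → a ≤ A → b ≤ B → delSum N A B L φ (j, a, b) = 0 := by
  simp only [(hasDerivAt_action_add_smul hL φ _).deriv]
  constructor
  · intro H j a b hj hjN ha hb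
    set v := delSum N A B L φ (j, a, b)
    have hmem : (j, a, b) ∈ nodes N A B := by
      simp only [nodes, cells, Finset.mem_product, Finset.mem_range]
      omega
    have hvar := H (updNode 0 (j, a, b) v)
      (fun _ _ => if_neg (by simp only [Prod.mk.injEq]; omega))
      (fun _ _ => if_neg (by simp only [Prod.mk.injEq]; omega))
    rw [Finset.sum_eq_single_of_mem _ hmem fun nd _ hnd => by
      rw [updNode, if_neg hnd, Pi.zero_apply, Pi.zero_apply, Pi.zero_apply, inner_zero_right],
      updNode, if_pos rfl] at hvar
    exact inner_self_eq_zero.mp hvar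
  · intro hEL δ h0 hN
    refine Finset.sum_eq_zero fun ⟨j, a, b⟩ hnd => ?_
    simp only [nodes, cells, Finset.mem_product, Finset.mem_range] at hnd
    obtain rfl | hj := Nat.eq_zero_or_pos j
    · rw [h0, inner_zero_right]
    obtain rfl | hjN := eq_or_lt_of_le (Nat.lt_succ_iff.mp hnd.1)
    · rw [hN, inner_zero_right]
    · rw [hEL j a b hj hjN (by omega) (by omega), inner_zero_left]

theorem delSum_of_interior (φ : ℕ → ℕ → ℕ → E2) {j a b : ℕ} (hj : 0 < j) (hjN : j < N)
    (ha : 0 < a) (haA : a < A) (hb : 0 < b) (hbB : b < B) :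
    delSum N A B L φ (j, a, b) =
      ∑ s : Fin 8, pgrad L (jet φ (j - s.val % 2) (a - s.val / 2 % 2) (b - s.val / 4)) s := by
  rw [delSum_eq_sum_cells, Finset.sum_comm]
  refine Finset.sum_congr rfl fun s _ => ?_
  have hs := s.isLt
  simp only [cellNode_eq_iff (j := j) (a := a) (b := b) (s := s) (by omega) (by omega) (by omega)]
  rw [Finset.sum_ite_eq', if_pos]
  simp only [cells, Finset.mem_product, Finset.mem_range]
  omega

theorem discrete_hamilton_principle_iff_discrete_EL_general
    (N A B : ℕ)
    (L : (Fin 8 → E2) → ℝ) (hL : Differentiable ℝ L)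
    (φ : ℕ → ℕ → ℕ → E2) :
    (∀ j a b : ℕ, 0 < j → j < N → a ≤ A → b ≤ B →
      gradient (fun y => action N A B L (updNode φ (j, a, b) y)) (φ j a b)
        = delSum N A B L φ (j, a, b))
    ∧
    ((∀ δ : ℕ → ℕ → ℕ → E2, (∀ a b, δ 0 a b = 0) → (∀ a b, δ N a b = 0) →
        deriv (fun ε : ℝ => action N A B L (fun j a b => φ j a b + ε • δ j a b)) 0 = 0)
      ↔ (∀ j a b : ℕ, 0 < j → j < N → a ≤ A → b ≤ B →
          delSum N A B L φ (j, a, b) = 0))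
    ∧
    (∀ j a b : ℕ, 0 < j → j < N → 0 < a → a < A → 0 < b → b < B →
      delSum N A B L φ (j, a, b)
        = pgrad L (jet φ (j-1) a b) 1 + pgrad L (jet φ (j-1) (a-1) b) 3
          + pgrad L (jet φ (j-1) a (b-1)) 5 + pgrad L (jet φ (j-1) (a-1) (b-1)) 7
          + pgrad L (jet φ j a b) 0 + pgrad L (jet φ j (a-1) b) 2
          + pgrad L (jet φ j a (b-1)) 4 + pgrad L (jet φ j (a-1) (b-1)) 6) := by
  refine ⟨fun j a b _ _ _ _ => (hasGradientAt_action_updNode hL φ (j, a, b)).gradient,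
    hamilton_iff_delSum_eq_zero hL φ, fun j a b hj hjN ha haA hb hbB => ?_⟩
  rw [delSum_of_interior φ hj hjN ha haA hb hbB, Fin.sum_univ_eight]
  norm_num
  abel

/-- **Discrete Hamilton principle ⟺ discrete Euler–Lagrange equations (2D)**:
(1) the gradient of the discrete action with respect to the node value `φ^j_{a,b}`
(for `0 < j < N`) equals the sum of `D_pL` over the incident (cell, slot) pairs;
(2) `φ` is a critical point of the action for all variations vanishing at the temporal
levels `j = 0` and `j = N` iff the discrete Euler–Lagrange node equation holds at every
node with `0 < j < N`;
(3) at an interior node the node equation takes the explicit eight-term form. -/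
theorem discrete_hamilton_principle_iff_discrete_EL
    (N A B : ℕ) (hN : 1 ≤ N) (hA : 1 ≤ A) (hB : 1 ≤ B)
    (L : (Fin 8 → E2) → ℝ) (hL : Differentiable ℝ L)
    (φ : ℕ → ℕ → ℕ → E2) :
    (∀ j a b : ℕ, 0 < j → j < N → a ≤ A → b ≤ B →
      gradient (fun y => action N A B L (updNode φ (j, a, b) y)) (φ j a b)
        = delSum N A B L φ (j, a, b))
    ∧
    ((∀ δ : ℕ → ℕ → ℕ → E2, (∀ a b, δ 0 a b = 0) → (∀ a b, δ N a b = 0) →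
        deriv (fun ε : ℝ => action N A B L (fun j a b => φ j a b + ε • δ j a b)) 0 = 0)
      ↔ (∀ j a b : ℕ, 0 < j → j < N → a ≤ A → b ≤ B →
          delSum N A B L φ (j, a, b) = 0))
    ∧
    (∀ j a b : ℕ, 0 < j → j < N → 0 < a → a < A → 0 < b → b < B →
      delSum N A B L φ (j, a, b)
        = pgrad L (jet φ (j-1) a b) 1 + pgrad L (jet φ (j-1) (a-1) b) 3
          + pgrad L (jet φ (j-1) a (b-1)) 5 + pgrad L (jet φ (j-1) (a-1) (b-1)) 7
          + pgrad L (jet φ j a b) 0 + pgrad L (jet φ j (a-1) b) 2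
          + pgrad L (jet φ j a (b-1)) 4 + pgrad L (jet φ j (a-1) (b-1)) 6) :=
  discrete_hamilton_principle_iff_discrete_EL_general N A B L hL φ

end
end

section
/- Discrete multisymplectic form formula (temporal-boundary form, 2D): assume L is twice continuously differentiable, let φ satisfy the discrete Euler–Lagrange node equations at every node with 0 < j < N, and let V and W be first variations along φ. Then Σ_{a=0}^{A−1} Σ_{b=0}^{B−1} [ Σ_{p ∈ {1,3,5,7}} ω_p(□⁰_{a,b})(V,W) + Σ_{p ∈ {2,4,6,8}} ω_p(□^{N−1}_{a,b})(V,W) ] = 0. -/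
open scoped RealInnerProductSpace

noncomputable section

/-- Second partial derivative `D_qD_pL(x)` applied to a slot-`q` variation `w ∈ ℝ²`,
producing the vector paired against slot `p`. -/
noncomputable def d2 (L : (Fin 8 → E2) → ℝ) (x : Fin 8 → E2) (p q : Fin 8) (w : E2) : E2 :=
  fderiv ℝ (fun y => pgrad L y p) x (Pi.single q w)

/-- `V` is a first variation along `φ`: the linearized discrete Euler–Lagrange node
equations hold at every node with `0 < j < N`. -/
def IsFirstVariation (N A B : ℕ) (L : (Fin 8 → E2) → ℝ)
    (φ V : ℕ → ℕ → ℕ → E2) : Prop :=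
  ∀ j a b : ℕ, 0 < j → j < N → a ≤ A → b ≤ B →
    (∑ j' ∈ Finset.range N, ∑ a' ∈ Finset.range A, ∑ b' ∈ Finset.range B, ∑ s : Fin 8,
      if cellNode j' a' b' s = (j, a, b) then
        ∑ q : Fin 8, d2 L (jet φ j' a' b') s q (jet V j' a' b' q)
      else 0) = 0

/-- The discrete Cartan 2-form contribution `ω_p(□^j_{a,b})(V,W)`. -/
noncomputable def omegaP (L : (Fin 8 → E2) → ℝ) (φ V W : ℕ → ℕ → ℕ → E2)
    (j a b : ℕ) (p : Fin 8) : ℝ :=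
  ∑ q : Fin 8,
    (⟪d2 L (jet φ j a b) p q (jet W j a b q), jet V j a b p⟫
      - ⟪d2 L (jet φ j a b) p q (jet V j a b q), jet W j a b p⟫)

/-!
Symmetry of the Hessian of `L` makes the eight slot contributions `ω_p` of every cell sum to
zero. Summing over all cells and regrouping the slots by the node they sit on, a node with
`0 < j < N` collects `⟪E W, V⟫ - ⟪E V, W⟫`, where `E` is the linearized Euler–Lagrange
expression at that node; it vanishes since `V` and `W` are first variations. What is left are
the slots on the time-`0` and time-`N` boundaries.
-/

section SlotGradient

variable {k : ℕ}

def slotGradient (p : Fin k) : ((Fin k → E2) →L[ℝ] ℝ) →L[ℝ] E2 :=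
  (InnerProductSpace.toDual ℝ E2).symm.toContinuousLinearEquiv.toContinuousLinearMap ∘L
    ContinuousLinearMap.precomp ℝ (ContinuousLinearMap.single ℝ (fun _ : Fin k => E2) p)

lemma inner_slotGradient (p : Fin k) (ℓ : (Fin k → E2) →L[ℝ] ℝ) (v : E2) :
    ⟪slotGradient p ℓ, v⟫ = ℓ (Pi.single p v) :=
  InnerProductSpace.toDual_symm_apply

lemma pgrad_eq_slotGradient {L : (Fin k → E2) → ℝ} {y : Fin k → E2}
    (hL : DifferentiableAt ℝ L y) (p : Fin k) :
    pgrad L y p = slotGradient p (fderiv ℝ L y) := by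
  have hsingle : ContinuousLinearMap.pi (Pi.single p (.id ℝ E2)) =
      ContinuousLinearMap.single ℝ (fun _ : Fin k => E2) p := by
    ext v i
    by_cases h : i = p <;> simp [h]
  have hdual : InnerProductSpace.toDual ℝ E2 (slotGradient p (fderiv ℝ L y)) =
      (fderiv ℝ L y).comp (ContinuousLinearMap.single ℝ (fun _ : Fin k => E2) p) := by
    ext v
    rw [InnerProductSpace.toDual_apply_apply, inner_slotGradient]
    rfl
  rw [← Function.update_eq_self p y] at hL
  have h := hL.hasFDerivAt.comp (y p) (hasFDerivAt_update (𝕜 := ℝ) y (y p))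
  rw [Function.update_eq_self, hsingle, ← hdual, ← hasGradientAt_iff_hasFDerivAt] at h
  exact h.gradient

end SlotGradient

section SecondDerivative

variable {L : (Fin 8 → E2) → ℝ}

lemma inner_d2 (hL : ContDiff ℝ 2 L) (x : Fin 8 → E2) (p q : Fin 8) (v w : E2) :
    ⟪d2 L x p q w, v⟫ = fderiv ℝ (fderiv ℝ L) x (Pi.single q w) (Pi.single p v) := by
  have hL1 : Differentiable ℝ L := hL.differentiable (by norm_num)
  have hfderiv : HasFDerivAt (fderiv ℝ L) (fderiv ℝ (fderiv ℝ L) x) x :=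
    ((hL.fderiv_right (m := 1) (by norm_num)).differentiable one_ne_zero x).hasFDerivAt
  have hpgrad : (fun y => pgrad L y p) = slotGradient p ∘ fderiv ℝ L :=
    funext fun y => pgrad_eq_slotGradient (hL1 y) p
  rw [d2, hpgrad, ((slotGradient p).hasFDerivAt.comp x hfderiv).fderiv]
  exact inner_slotGradient _ _ _

lemma inner_d2_comm (hL : ContDiff ℝ 2 L) (x : Fin 8 → E2) (p q : Fin 8) (v w : E2) :
    ⟪d2 L x p q w, v⟫ = ⟪d2 L x q p v, w⟫ := by
  rw [inner_d2 hL, inner_d2 hL]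
  exact hL.contDiffAt.isSymmSndFDerivAt (by simp) _ _

end SecondDerivative

def pgradDeriv (L : (Fin 8 → E2) → ℝ) (φ V : ℕ → ℕ → ℕ → E2) (j a b : ℕ) (p : Fin 8) : E2 :=
  ∑ q : Fin 8, d2 L (jet φ j a b) p q (jet V j a b q)

section CartanForm

variable {L : (Fin 8 → E2) → ℝ} {φ V W : ℕ → ℕ → ℕ → E2}

lemma omegaP_eq_inner_sub_inner (j a b : ℕ) (p : Fin 8) :
    omegaP L φ V W j a b p =
      ⟪pgradDeriv L φ W j a b p, jet V j a b p⟫ - ⟪pgradDeriv L φ V j a b p, jet W j a b p⟫ := by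
  rw [omegaP, Finset.sum_sub_distrib, pgradDeriv, pgradDeriv, sum_inner, sum_inner]

lemma sum_omegaP_eq_zero (hL : ContDiff ℝ 2 L) (j a b : ℕ) :
    ∑ p : Fin 8, omegaP L φ V W j a b p = 0 := by
  simp only [omegaP, Finset.sum_sub_distrib, sub_eq_zero]
  rw [Finset.sum_comm]
  exact Finset.sum_congr rfl fun q _ => Finset.sum_congr rfl fun p _ => inner_d2_comm hL _ _ _ _ _

end CartanForm

lemma jet_eq_of_cellNode_eq {φ : ℕ → ℕ → ℕ → E2} {j a b j' a' b' : ℕ} {s : Fin 8}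
    (h : cellNode j a b s = (j', a', b')) : jet φ j a b s = φ j' a' b' := by
  simp only [cellNode, Prod.mk.injEq] at h
  obtain ⟨rfl, rfl, rfl⟩ := h
  rfl

section NodeSum

variable {M : Type*} [AddCommMonoid M] (N A B : ℕ)

def nodeSum (F : ℕ → ℕ → ℕ → Fin 8 → M) (n : ℕ × ℕ × ℕ) : M :=
  ∑ j ∈ Finset.range N, ∑ a ∈ Finset.range A, ∑ b ∈ Finset.range B, ∑ s : Fin 8,
    if cellNode j a b s = n then F j a b s else 0

lemma sum_nodeSum (S : Finset (ℕ × ℕ × ℕ)) (F : ℕ → ℕ → ℕ → Fin 8 → M) :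
    ∑ n ∈ S, nodeSum N A B F n =
      ∑ j ∈ Finset.range N, ∑ a ∈ Finset.range A, ∑ b ∈ Finset.range B, ∑ s : Fin 8,
        if cellNode j a b s ∈ S then F j a b s else 0 := by
  have hswap : ∑ n ∈ S, nodeSum N A B F n =
      ∑ j ∈ Finset.range N, ∑ a ∈ Finset.range A, ∑ b ∈ Finset.range B, ∑ s : Fin 8,
        ∑ n ∈ S, if cellNode j a b s = n then F j a b s else 0 := by
    unfold nodeSum
    rw [Finset.sum_comm]
    refine Finset.sum_congr rfl fun j _ => ?_
    rw [Finset.sum_comm]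
    refine Finset.sum_congr rfl fun a _ => ?_
    rw [Finset.sum_comm]
    exact Finset.sum_congr rfl fun b _ => Finset.sum_comm
  simp only [hswap, Finset.sum_ite_eq]

end NodeSum

lemma nodeSum_omegaP {L : (Fin 8 → E2) → ℝ} {φ V W : ℕ → ℕ → ℕ → E2} (N A B j a b : ℕ) :
    nodeSum N A B (omegaP L φ V W) (j, a, b) =
      ⟪nodeSum N A B (pgradDeriv L φ W) (j, a, b), V j a b⟫
        - ⟪nodeSum N A B (pgradDeriv L φ V) (j, a, b), W j a b⟫ := by
  have hincidence : ∀ j' a' b' s,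
      (if cellNode j' a' b' s = (j, a, b) then omegaP L φ V W j' a' b' s else 0) =
        ⟪if cellNode j' a' b' s = (j, a, b) then pgradDeriv L φ W j' a' b' s else 0, V j a b⟫
          - ⟪if cellNode j' a' b' s = (j, a, b) then pgradDeriv L φ V j' a' b' s else 0,
              W j a b⟫ := by
    intro j' a' b' s
    split_ifs with h
    · rw [omegaP_eq_inner_sub_inner, jet_eq_of_cellNode_eq h, jet_eq_of_cellNode_eq h]
    · simp
  simp only [nodeSum, hincidence, Finset.sum_sub_distrib, sum_inner]

lemma sum_interior_omegaP_eq_zero {N A B : ℕ} {L : (Fin 8 → E2) → ℝ} {φ V W : ℕ → ℕ → ℕ → E2}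
    (hV : IsFirstVariation N A B L φ V) (hW : IsFirstVariation N A B L φ W) :
    ∑ j ∈ Finset.range N, ∑ a ∈ Finset.range A, ∑ b ∈ Finset.range B, ∑ s : Fin 8,
      (if 0 < j + s.val % 2 ∧ j + s.val % 2 < N then omegaP L φ V W j a b s else 0) = 0 := by
  set S := Finset.Ioo 0 N ×ˢ Finset.range (A + 1) ×ˢ Finset.range (B + 1)
  have hS : ∑ n ∈ S, nodeSum N A B (omegaP L φ V W) n = 0 := by
    refine Finset.sum_eq_zero fun ⟨j, a, b⟩ hn => ?_
    simp only [S, Finset.mem_product, Finset.mem_Ioo, Finset.mem_range] at hn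
    have hVn : nodeSum N A B (pgradDeriv L φ V) (j, a, b) = 0 :=
      hV j a b hn.1.1 hn.1.2 (by omega) (by omega)
    have hWn : nodeSum N A B (pgradDeriv L φ W) (j, a, b) = 0 :=
      hW j a b hn.1.1 hn.1.2 (by omega) (by omega)
    rw [nodeSum_omegaP, hVn, hWn, inner_zero_left, inner_zero_left, sub_zero]
  refine Eq.trans ?_ hS
  rw [sum_nodeSum]
  refine Finset.sum_congr rfl fun j _ => Finset.sum_congr rfl fun a ha =>
    Finset.sum_congr rfl fun b hb => Finset.sum_congr rfl fun s _ => if_congr ?_ rfl rfl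
  simp only [Finset.mem_range] at ha hb
  simp only [S, cellNode, Finset.mem_product, Finset.mem_Ioo, Finset.mem_range]
  omega

lemma sum_slots_eq_interior_add_boundary {M : Type*} [AddCommMonoid M] {N j : ℕ} (hj : j < N)
    (g : Fin 8 → M) :
    ∑ s : Fin 8, g s =
      ∑ s : Fin 8, (if 0 < j + s.val % 2 ∧ j + s.val % 2 < N then g s else 0)
        + ((if j = 0 then g 0 + g 2 + g 4 + g 6 else 0)
          + (if j = N - 1 then g 1 + g 3 + g 5 + g 7 else 0)) := by
  have hlast : j = N - 1 ↔ ¬j + 1 < N := by omega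
  simp only [Fin.sum_univ_eight, Fin.isValue, Fin.coe_ofNat_eq_mod, Nat.reduceMod, hlast]
  split_ifs <;> first | omega | abel

theorem discrete_multisymplectic_form_formula_2D_general
    (N A B : ℕ) (hN : 1 ≤ N)
    (L : (Fin 8 → E2) → ℝ) (hL : ContDiff ℝ 2 L)
    (φ : ℕ → ℕ → ℕ → E2)
    (V W : ℕ → ℕ → ℕ → E2)
    (hV : IsFirstVariation N A B L φ V) (hW : IsFirstVariation N A B L φ W) :
    ∑ a ∈ Finset.range A, ∑ b ∈ Finset.range B,
      ((omegaP L φ V W 0 a b 0 + omegaP L φ V W 0 a b 2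
          + omegaP L φ V W 0 a b 4 + omegaP L φ V W 0 a b 6)
        + (omegaP L φ V W (N - 1) a b 1 + omegaP L φ V W (N - 1) a b 3
          + omegaP L φ V W (N - 1) a b 5 + omegaP L φ V W (N - 1) a b 7)) = 0 := by
  have htotal : ∑ j ∈ Finset.range N, ∑ a ∈ Finset.range A, ∑ b ∈ Finset.range B,
      ∑ s : Fin 8, omegaP L φ V W j a b s = 0 := by
    simp only [sum_omegaP_eq_zero hL, Finset.sum_const_zero]
  rw [Finset.sum_congr rfl fun j hj => Finset.sum_congr rfl fun a _ =>
      Finset.sum_congr rfl fun b _ =>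
        sum_slots_eq_interior_add_boundary (Finset.mem_range.mp hj) (omegaP L φ V W j a b)]
    at htotal
  simp only [Finset.sum_add_distrib, Finset.sum_ite_irrel, Finset.sum_const_zero,
    Finset.sum_ite_eq', Finset.mem_range, sum_interior_omegaP_eq_zero hV hW, zero_add,
    if_pos (by omega : 0 < N), if_pos (by omega : N - 1 < N)] at htotal
  simpa only [Finset.sum_add_distrib] using htotal

/-- **Discrete multisymplectic form formula (temporal-boundary form, 2D)**: for a C²
cell Lagrangian, a solution `φ` of the discrete Euler–Lagrange node equations, and
first variations `V`, `W` along `φ`, the sum over the initial-time cells of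
`ω_p` for the time-`0` slots plus the sum over the final-time cells of `ω_p` for the
time-`N` slots vanishes. -/
theorem discrete_multisymplectic_form_formula_2D
    (N A B : ℕ) (hN : 1 ≤ N) (hA : 1 ≤ A) (hB : 1 ≤ B)
    (L : (Fin 8 → E2) → ℝ) (hL : ContDiff ℝ 2 L)
    (φ : ℕ → ℕ → ℕ → E2)
    (hDEL : ∀ j a b : ℕ, 0 < j → j < N → a ≤ A → b ≤ B →
      (∑ j' ∈ Finset.range N, ∑ a' ∈ Finset.range A, ∑ b' ∈ Finset.range B, ∑ s : Fin 8,
        if cellNode j' a' b' s = (j, a, b) then pgrad L (jet φ j' a' b') s else 0) = 0)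
    (V W : ℕ → ℕ → ℕ → E2)
    (hV : IsFirstVariation N A B L φ V) (hW : IsFirstVariation N A B L φ W) :
    ∑ a ∈ Finset.range A, ∑ b ∈ Finset.range B,
      ((omegaP L φ V W 0 a b 0 + omegaP L φ V W 0 a b 2
          + omegaP L φ V W 0 a b 4 + omegaP L φ V W 0 a b 6)
        + (omegaP L φ V W (N - 1) a b 1 + omegaP L φ V W (N - 1) a b 3
          + omegaP L φ V W (N - 1) a b 5 + omegaP L φ V W (N - 1) a b 7)) = 0 :=
  discrete_multisymplectic_form_formula_2D_general N A B hN L hL φ V W hV hW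

end
end
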